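/- arXiv:2111.14284 — 4 statements merged into one kernel-verified Lean document; each statement's English description precedes it below -/
import Mathlib

section
/- For every integer n ≥ 2 there exists a constant c₁ = c₁(n), depending only on n, such that cp(D) ≤ c₁ for every weakly connected T_n-free digraph D whose underlying graph G_D is {K_{1,n}, P_n}-free. -/
/-! ## Basic notions for graphs and digraphs

A digraph on a vertex type `V` is given by its arc relation `E : V → V → Prop`.
Simplicity and absence of 2-cycles is expressed by the hypothesis
`∀ u v, E u v → ¬ E v u`.  The underlying graph `G_D` is `SimpleGraph.fromRel E`. -/

/-- `G` contains an induced copy of the simple graph `H`. -/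
def HasInducedCopyG {W V : Type} (H : SimpleGraph W) (G : SimpleGraph V) : Prop :=
  ∃ f : W → V, Function.Injective f ∧ ∀ a b : W, G.Adj (f a) (f b) ↔ H.Adj a b

/-- The digraph `E` contains an induced copy of the digraph `H`. -/
def DigraphHasInducedCopy {W V : Type} (H : W → W → Prop) (E : V → V → Prop) : Prop :=
  ∃ f : W → V, Function.Injective f ∧ ∀ a b : W, E (f a) (f b) ↔ H a b

/-- The star `K_{1,n}` with one center and `n` leaves. -/
def StarG (n : ℕ) : SimpleGraph (Unit ⊕ Fin n) :=
  SimpleGraph.fromRel (fun a b =>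
    match a, b with
    | Sum.inl _, Sum.inr _ => True
    | _, _ => False)

/-- The path `P_n` of order `n`. -/
def PathG (n : ℕ) : SimpleGraph (Fin n) :=
  SimpleGraph.fromRel (fun i j => i.val + 1 = j.val)

/-- The graph `K*_n`: a complete graph on the `x_i` together with pendant edges `x_i y_i`. -/
def KStarG (n : ℕ) : SimpleGraph (Fin n ⊕ Fin n) :=
  SimpleGraph.fromRel (fun a b =>
    match a, b with
    | Sum.inl i, Sum.inl j => i ≠ j
    | Sum.inl i, Sum.inr j => i = j
    | _, _ => False)

/-- The graph `F^(1)_n` on `{x₁,x₂} ∪ {yᵢ} ∪ {zᵢ}`: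
edges `x₁x₂, x₁y₁, x₁z₁` together with the two paths `y₁⋯y_n` and `z₁⋯z_n`. -/
def F1G (n : ℕ) : SimpleGraph (Fin 2 ⊕ Fin n ⊕ Fin n) :=
  SimpleGraph.fromRel (fun a b =>
    match a, b with
    | Sum.inl i, Sum.inl j => i.val = 0 ∧ j.val = 1
    | Sum.inl i, Sum.inr (Sum.inl j) => i.val = 0 ∧ j.val = 0
    | Sum.inl i, Sum.inr (Sum.inr j) => i.val = 0 ∧ j.val = 0
    | Sum.inr (Sum.inl i), Sum.inr (Sum.inl j) => i.val + 1 = j.val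
    | Sum.inr (Sum.inr i), Sum.inr (Sum.inr j) => i.val + 1 = j.val
    | _, _ => False)

/-- The single edge `y₁z₁` (used to build `F^(2)_n` and `F^(4)_n`). -/
def YZEdgeG (n : ℕ) : SimpleGraph (Fin 2 ⊕ Fin n ⊕ Fin n) :=
  SimpleGraph.fromRel (fun a b =>
    match a, b with
    | Sum.inr (Sum.inl i), Sum.inr (Sum.inr j) => i.val = 0 ∧ j.val = 0
    | _, _ => False)

/-- `F^(2)_n = F^(1)_n + y₁z₁`. -/
def F2G (n : ℕ) : SimpleGraph (Fin 2 ⊕ Fin n ⊕ Fin n) := F1G n ⊔ YZEdgeG n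

/-- The graph `F^(3)_n`: edges `x₁y₁, x₁z₁, x₂y₁, x₂z₁` together with the two paths. -/
def F3G (n : ℕ) : SimpleGraph (Fin 2 ⊕ Fin n ⊕ Fin n) :=
  SimpleGraph.fromRel (fun a b =>
    match a, b with
    | Sum.inl _, Sum.inr (Sum.inl j) => j.val = 0
    | Sum.inl _, Sum.inr (Sum.inr j) => j.val = 0
    | Sum.inr (Sum.inl i), Sum.inr (Sum.inl j) => i.val + 1 = j.val
    | Sum.inr (Sum.inr i), Sum.inr (Sum.inr j) => i.val + 1 = j.val
    | _, _ => False)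

/-- `F^(4)_n = F^(3)_n + y₁z₁`. -/
def F4G (n : ℕ) : SimpleGraph (Fin 2 ⊕ Fin n ⊕ Fin n) := F3G n ⊔ YZEdgeG n

/-- The digraph `D^(1)_n` on `{x₁} ∪ {yᵢ} ∪ {zᵢ}` with arcs
`(x₁,y₁), (z₁,x₁), (y₁,z₁)`, `(y_{i+1}, y_i)` and `(z_i, z_{i+1})`. -/
def D1Rel (n : ℕ) : (Unit ⊕ Fin n ⊕ Fin n) → (Unit ⊕ Fin n ⊕ Fin n) → Prop := fun a b =>
  match a, b with
  | Sum.inl _, Sum.inr (Sum.inl j) => j.val = 0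
  | Sum.inr (Sum.inr i), Sum.inl _ => i.val = 0
  | Sum.inr (Sum.inl i), Sum.inr (Sum.inr j) => i.val = 0 ∧ j.val = 0
  | Sum.inr (Sum.inl i), Sum.inr (Sum.inl j) => j.val + 1 = i.val
  | Sum.inr (Sum.inr i), Sum.inr (Sum.inr j) => i.val + 1 = j.val
  | _, _ => False

/-- `D^(2)_n`: obtained from `D^(1)_n` by replacing the arc `(z₁,x₁)` by `(x₁,z₁)`. -/
def D2Rel (n : ℕ) : (Unit ⊕ Fin n ⊕ Fin n) → (Unit ⊕ Fin n ⊕ Fin n) → Prop := fun a b =>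
  match a, b with
  | Sum.inl _, Sum.inr (Sum.inl j) => j.val = 0
  | Sum.inl _, Sum.inr (Sum.inr j) => j.val = 0
  | Sum.inr (Sum.inl i), Sum.inr (Sum.inr j) => i.val = 0 ∧ j.val = 0
  | Sum.inr (Sum.inl i), Sum.inr (Sum.inl j) => j.val + 1 = i.val
  | Sum.inr (Sum.inr i), Sum.inr (Sum.inr j) => i.val + 1 = j.val
  | _, _ => False

/-- `D^(3)_n`: obtained from `D^(1)_n` by replacing the arc `(x₁,y₁)` by `(y₁,x₁)`. -/
def D3Rel (n : ℕ) : (Unit ⊕ Fin n ⊕ Fin n) → (Unit ⊕ Fin n ⊕ Fin n) → Prop := fun a b =>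
  match a, b with
  | Sum.inr (Sum.inl i), Sum.inl _ => i.val = 0
  | Sum.inr (Sum.inr i), Sum.inl _ => i.val = 0
  | Sum.inr (Sum.inl i), Sum.inr (Sum.inr j) => i.val = 0 ∧ j.val = 0
  | Sum.inr (Sum.inl i), Sum.inr (Sum.inl j) => j.val + 1 = i.val
  | Sum.inr (Sum.inr i), Sum.inr (Sum.inr j) => i.val + 1 = j.val
  | _, _ => False

/-- The transitive tournament `T_n`. -/
def TRel (n : ℕ) : Fin n → Fin n → Prop := fun i j => i < j

/-- A (nonempty) directed path in the digraph `E`, recorded as its list of vertices. -/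
def IsDirPathList {V : Type} (E : V → V → Prop) (l : List V) : Prop :=
  l ≠ [] ∧ l.Nodup ∧ l.Chain' E

/-- The path cover number of the subdigraph of `E` induced by `X`:
the minimum number of directed paths of `E[X]` whose vertex sets cover `X`. -/
noncomputable def pcOn {V : Type} (E : V → V → Prop) (X : Set V) : ℕ :=
  sInf {k | ∃ P : Finset (List V), P.card = k ∧
    (∀ l ∈ P, IsDirPathList E l ∧ ∀ v ∈ l, v ∈ X) ∧
    ∀ v ∈ X, ∃ l ∈ P, v ∈ l}

/-- The path partition number of the subdigraph of `E` induced by `X`: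
the minimum number of pairwise vertex-disjoint directed paths of `E[X]`
whose vertex sets partition `X`. -/
noncomputable def ppOn {V : Type} (E : V → V → Prop) (X : Set V) : ℕ :=
  sInf {k | ∃ P : Finset (List V), P.card = k ∧
    (∀ l ∈ P, IsDirPathList E l ∧ ∀ v ∈ l, v ∈ X) ∧
    (∀ v ∈ X, ∃ l ∈ P, v ∈ l) ∧
    ∀ l ∈ P, ∀ l' ∈ P, l ≠ l' → ∀ v ∈ l, v ∉ l'}

/-- A (nonempty) path in the simple graph `G`, recorded as its list of vertices. -/
def IsPathList {V : Type} (G : SimpleGraph V) (l : List V) : Prop :=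
  l ≠ [] ∧ l.Nodup ∧ l.Chain' G.Adj

/-- The path cover number `pc(G)` of a simple graph `G`. -/
noncomputable def pcG {V : Type} (G : SimpleGraph V) : ℕ :=
  sInf {k | ∃ P : Finset (List V), P.card = k ∧
    (∀ l ∈ P, IsPathList G l) ∧ ∀ v : V, ∃ l ∈ P, v ∈ l}

/-- The path partition number `pp(G)` of a simple graph `G`. -/
noncomputable def ppG {V : Type} (G : SimpleGraph V) : ℕ :=
  sInf {k | ∃ P : Finset (List V), P.card = k ∧
    (∀ l ∈ P, IsPathList G l) ∧ (∀ v : V, ∃ l ∈ P, v ∈ l) ∧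
    ∀ l ∈ P, ∀ l' ∈ P, l ≠ l' → ∀ v ∈ l, v ∉ l'}

/-- A directed cycle in the digraph `E`, recorded as its list of vertices. -/
def IsDirCycleList {V : Type} (E : V → V → Prop) (l : List V) : Prop :=
  ∃ h : l ≠ [], 3 ≤ l.length ∧ l.Nodup ∧ l.Chain' E ∧ E (l.getLast h) (l.head h)

/-- A member of a cycle cover/partition: a directed cycle, or a weakly connected
subdigraph of order at most two. -/
def IsCyclePartMember {V : Type} (E : V → V → Prop) (l : List V) : Prop :=
  IsDirCycleList E l ∨
    (l ≠ [] ∧ l.length ≤ 2 ∧ l.Nodup ∧ l.Chain' (fun a b => E a b ∨ E b a))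

/-- The cycle partition number `cp(D)` of the digraph `E`. -/
noncomputable def cpNum {V : Type} (E : V → V → Prop) : ℕ :=
  sInf {k | ∃ P : Finset (List V), P.card = k ∧
    (∀ l ∈ P, IsCyclePartMember E l) ∧
    (∀ v : V, ∃ l ∈ P, v ∈ l) ∧
    ∀ l ∈ P, ∀ l' ∈ P, l ≠ l' → ∀ v ∈ l, v ∉ l'}

/-- `v : Fin m → V` enumerates an induced path of the simple graph `G`. -/
def IsInducedPathEmb {V : Type} (G : SimpleGraph V) {m : ℕ} (v : Fin m → V) : Prop :=
  Function.Injective v ∧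
    ∀ i j : Fin m, G.Adj (v i) (v j) ↔ (i.val + 1 = j.val ∨ j.val + 1 = i.val)

/-- `w : Fin m → V` enumerates an induced pseudo-path of the digraph `E`:
the induced subdigraph on its image has a path as underlying graph. -/
def IsInducedPsPath {V : Type} (E : V → V → Prop) {m : ℕ} (w : Fin m → V) : Prop :=
  Function.Injective w ∧
    ∀ i j : Fin m, (E (w i) (w j) ∨ E (w j) (w i)) ↔ (i.val + 1 = j.val ∨ j.val + 1 = i.val)

/-- `r(P)` for a pseudo-path enumerated by `w`: the number of (internal) vertices
having out-degree 2 or in-degree 2 in the pseudo-path. -/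
noncomputable def turnCount {V : Type} (E : V → V → Prop) {m : ℕ} (w : Fin m → V) : ℕ :=
  Set.ncard {i : Fin m | ∃ j k : Fin m, j.val + 1 = i.val ∧ i.val + 1 = k.val ∧
    ((E (w i) (w j) ∧ E (w i) (w k)) ∨ (E (w j) (w i) ∧ E (w k) (w i)))}

/-- Condition (D1): the underlying graph of `E` is `{K*_n, K_{1,n}, F^(1)_n, F^(2)_n}`-free. -/
def CondD1 {V : Type} (n : ℕ) (E : V → V → Prop) : Prop :=
  ¬ HasInducedCopyG (KStarG n) (SimpleGraph.fromRel E) ∧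
  ¬ HasInducedCopyG (StarG n) (SimpleGraph.fromRel E) ∧
  ¬ HasInducedCopyG (F1G n) (SimpleGraph.fromRel E) ∧
  ¬ HasInducedCopyG (F2G n) (SimpleGraph.fromRel E)

/-- Condition (D'1): the underlying graph of `E` is
`{K*_n, K_{1,n}, F^(1)_n, F^(2)_n, F^(3)_n, F^(4)_n}`-free. -/
def CondD1' {V : Type} (n : ℕ) (E : V → V → Prop) : Prop :=
  CondD1 n E ∧
  ¬ HasInducedCopyG (F3G n) (SimpleGraph.fromRel E) ∧
  ¬ HasInducedCopyG (F4G n) (SimpleGraph.fromRel E)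

/-- Condition (D2): `E` is `{D^(1)_n, D^(2)_n, D^(3)_n}`-free. -/
def CondD2 {V : Type} (n : ℕ) (E : V → V → Prop) : Prop :=
  ¬ DigraphHasInducedCopy (D1Rel n) E ∧
  ¬ DigraphHasInducedCopy (D2Rel n) E ∧
  ¬ DigraphHasInducedCopy (D3Rel n) E

/-- Condition (D3): `r(P) ≤ n` for every induced pseudo-path `P` of `E`. -/
def CondD3 {V : Type} (n : ℕ) (E : V → V → Prop) : Prop :=
  ∀ (m : ℕ) (w : Fin m → V), IsInducedPsPath E w → turnCount E w ≤ n

/-- The Ramsey number `R(a, b)`: the least `R` such that every graph on at least `R`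
vertices contains a clique of size `a` or an independent set of size `b`. -/
noncomputable def ramseyNumber (a b : ℕ) : ℕ :=
  sInf {R | ∀ m : ℕ, R ≤ m → ∀ G : SimpleGraph (Fin m),
    (∃ s : Finset (Fin m), G.IsNClique a s) ∨ (∃ s : Finset (Fin m), Gᶜ.IsNClique b s)}

/-- The independence number of the subgraph of `G` induced by `X`. -/
noncomputable def indepNumOn {V : Type} (G : SimpleGraph V) (X : Set V) : ℕ :=
  sSup {k | ∃ s : Finset V, ↑s ⊆ X ∧ s.card = k ∧ ∀ a ∈ s, ∀ b ∈ s, a ≠ b → ¬ G.Adj a b}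

/-- The independence number `α(G)`. -/
noncomputable def indepNum {V : Type} (G : SimpleGraph V) : ℕ := indepNumOn G Set.univ

/-- The neighborhood `N_G(X)` of a set of vertices. -/
def nbhd {V : Type} (G : SimpleGraph V) (X : Set V) : Set V :=
  {v | v ∉ X ∧ ∃ x ∈ X, G.Adj v x}

/-! `P_n`-freeness bounds the diameter of `G_D` by `n - 2`, since a shortest path is induced.
A neighbourhood of size `transIndepBound n n` contains, by an ordered Ramsey argument, either `n`
vertices on which `D` is transitive, i.e. an induced `T_n`, or an independent `n`-set, i.e. an
induced `K_{1,n}`; so all degrees are below that bound. Bounded degree and bounded diameter bound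
`|V|`, and the partition into singletons gives `cp(D) ≤ |V|`. -/

open Finset

def transIndepBound : ℕ → ℕ → ℕ
  | 0, _ => 0
  | _ + 1, 0 => 0
  | a + 1, b + 1 => 2 * transIndepBound a (b + 1) + transIndepBound (a + 1) b + 1

lemma exists_pairwise_or_isNIndepSet {V : Type*} (E : V → V → Prop) (a b : ℕ) (s : Finset V)
    (hs : transIndepBound a b ≤ #s) :
    (∃ l : List V, l.length = a ∧ (∀ x ∈ l, x ∈ s) ∧ l.Pairwise E) ∨
      ∃ t ⊆ s, (SimpleGraph.fromRel E).IsNIndepSet b t := by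
  induction a generalizing b s with
  | zero => exact .inl ⟨[], rfl, by simp, .nil⟩
  | succ a iha =>
    induction b generalizing s with
    | zero => exact .inr ⟨∅, empty_subset s, by simp [SimpleGraph.isNIndepSet_iff]⟩
    | succ b ihb =>
      classical
      simp only [transIndepBound] at hs
      obtain ⟨v, hv⟩ : s.Nonempty := card_pos.mp (by omega)
      -- `v` prepends to a transitive list of out-neighbours, appends to one of in-neighbours,
      -- or joins an independent set of non-neighbours: hence the recursion for `transIndepBound`
      set sOut := (s.erase v).filter (E v ·)
      set sIn := (s.erase v).filter (E · v)
      set sNon := (s.erase v).filter fun u => ¬ E v u ∧ ¬ E u v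
      have hcard : #s ≤ #sOut + #sIn + #sNon + 1 := by
        have hcover : s.erase v ⊆ sOut ∪ sIn ∪ sNon := by
          intro u hu
          simp only [sOut, sIn, sNon, mem_union, mem_filter]
          tauto
        have := card_le_card hcover
        have := card_union_le (sOut ∪ sIn) sNon
        have := card_union_le sOut sIn
        have := card_erase_of_mem hv
        omega
      have mem_of_mem_filter {p : V → Prop} [DecidablePred p] {x : V}
          (hx : x ∈ (s.erase v).filter p) : x ≠ v ∧ x ∈ s ∧ p x := by
        simpa [and_assoc] using hx
      obtain h | h | h : transIndepBound a (b + 1) ≤ #sOut ∨ transIndepBound a (b + 1) ≤ #sIn ∨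
          transIndepBound (a + 1) b ≤ #sNon := by omega
      · obtain ⟨l, hlen, hls, hl⟩ | ⟨t, hts, ht⟩ := iha (b + 1) sOut h
        · refine .inl ⟨v :: l, by simp [hlen], ?_, List.pairwise_cons.mpr ⟨?_, hl⟩⟩
          · simpa [hv] using fun x hx => (mem_of_mem_filter (hls x hx)).2.1
          · exact fun x hx => (mem_of_mem_filter (hls x hx)).2.2
        · exact .inr ⟨t, hts.trans ((filter_subset _ _).trans (erase_subset _ _)), ht⟩
      · obtain ⟨l, hlen, hls, hl⟩ | ⟨t, hts, ht⟩ := iha (b + 1) sIn h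
        · refine .inl ⟨l ++ [v], by simp [hlen], ?_, List.pairwise_append.mpr ⟨hl, by simp, ?_⟩⟩
          · simpa [hv, or_imp, forall_and] using fun x hx => (mem_of_mem_filter (hls x hx)).2.1
          · simpa using fun x hx => (mem_of_mem_filter (hls x hx)).2.2
        · exact .inr ⟨t, hts.trans ((filter_subset _ _).trans (erase_subset _ _)), ht⟩
      · obtain ⟨l, hlen, hls, hl⟩ | ⟨t, hts, ht⟩ := ihb sNon h
        · exact .inl ⟨l, hlen, fun x hx => (mem_of_mem_filter (hls x hx)).2.1, hl⟩
        · refine .inr ⟨insert v t, insert_subset hv fun x hx => (mem_of_mem_filter (hts hx)).2.1,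
            ?_⟩
          rw [← SimpleGraph.isNClique_compl] at ht ⊢
          refine ht.insert fun x hx => ?_
          obtain ⟨hxv, -, hE⟩ := mem_of_mem_filter (hts hx)
          simp [SimpleGraph.fromRel_adj, Ne.symm hxv, hE.1, hE.2]

lemma digraphHasInducedCopy_tRel_of_pairwise {V : Type} {E : V → V → Prop}
    (hE : ∀ u v, E u v → ¬ E v u) {l : List V} (hl : l.Pairwise E) :
    DigraphHasInducedCopy (TRel l.length) E := by
  have hirr : ∀ x, ¬ E x x := fun x h => hE x x h h
  have hE' : ∀ i j : Fin l.length, E l[i] l[j] ↔ i < j := by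
    refine fun i j => ⟨fun hij => ?_, List.pairwise_iff_getElem.mp hl i j i.2 j.2⟩
    by_contra hge
    rcases (not_lt.mp hge).lt_or_eq with hlt | rfl
    · exact hE _ _ hij (List.pairwise_iff_getElem.mp hl j i j.2 i.2 hlt)
    · exact hirr _ hij
  refine ⟨fun i => l[i], fun i j (hij : l[i] = l[j]) => ?_, hE'⟩
  have hi := hE' i j
  have hj := hE' j i
  rw [hij] at hi hj
  exact le_antisymm (not_lt.mp fun h => hirr _ (hj.mpr h)) (not_lt.mp fun h => hirr _ (hi.mpr h))

lemma SimpleGraph.IsNIndepSet.hasInducedCopyG_starG {V : Type} {G : SimpleGraph V} {n : ℕ}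
    {a : V} {t : Finset V} (ht : G.IsNIndepSet n t) (hadj : ∀ x ∈ t, G.Adj a x) :
    HasInducedCopyG (StarG n) G := by
  set e : Fin n ≃ t := (t.equivFinOfCardEq ht.card_eq).symm
  have hne : ∀ i, a ≠ e i := fun i => (hadj _ (e i).2).ne
  refine ⟨Sum.elim (fun _ => a) fun i => e i, ?_, ?_⟩
  · rintro (_ | i) (_ | j) h
    · rfl
    · exact absurd h (hne j)
    · exact absurd h.symm (hne i)
    · simpa using e.injective (Subtype.ext h)
  · rintro (_ | i) (_ | j)
    · simp [StarG]
    · simpa [StarG] using hadj _ (e j).2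
    · simpa [StarG] using (hadj _ (e i).2).symm
    · simp only [Sum.elim_inr, StarG, SimpleGraph.fromRel_adj, and_false, or_self, iff_false]
      by_cases h : (e i : V) = e j
      · exact h ▸ G.irrefl
      · exact ht.isIndepSet (e i).2 (e j).2 h

lemma degree_fromRel_lt_transIndepBound {V : Type} [Fintype V] {E : V → V → Prop}
    [DecidableRel (SimpleGraph.fromRel E).Adj] (hE : ∀ u v, E u v → ¬ E v u) {n : ℕ}
    (hT : ¬ DigraphHasInducedCopy (TRel n) E)
    (hS : ¬ HasInducedCopyG (StarG n) (SimpleGraph.fromRel E)) (x : V) :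
    (SimpleGraph.fromRel E).degree x < transIndepBound n n := by
  by_contra! h
  rw [← SimpleGraph.card_neighborFinset_eq_degree] at h
  obtain ⟨l, hlen, -, hl⟩ | ⟨t, hts, ht⟩ := exists_pairwise_or_isNIndepSet E n n _ h
  · exact hT (hlen ▸ digraphHasInducedCopy_tRel_of_pairwise hE hl)
  · exact hS (ht.hasInducedCopyG_starG fun y hy => by simpa using hts hy)

lemma pathG_adj {n : ℕ} {i j : Fin n} :
    (PathG n).Adj i j ↔ i.val + 1 = j.val ∨ j.val + 1 = i.val := by
  simp only [PathG, SimpleGraph.fromRel_adj, and_iff_right_iff_imp]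
  rintro h rfl
  omega

namespace SimpleGraph

variable {V : Type*} {G : SimpleGraph V} {u v : V}

lemma Walk.not_adj_getVert_of_length_eq_dist {p : G.Walk u v} (hp : p.length = G.dist u v)
    {i j : ℕ} (hij : i + 2 ≤ j) (hj : j ≤ p.length) : ¬ G.Adj (p.getVert i) (p.getVert j) := by
  intro hadj
  have hshort := dist_le ((p.take i).append (.cons hadj (p.drop j)))
  simp only [Walk.length_append, Walk.take_length, Walk.length_cons, Walk.drop_length] at hshort
  omega

lemma Reachable.exists_adj_or_eq_dist_le (h : G.Reachable u v) {r : ℕ}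
    (hv : G.dist u v ≤ r + 1) : ∃ x, G.dist u x ≤ r ∧ (x = v ∨ G.Adj x v) := by
  obtain ⟨p, hp⟩ := h.exists_walk_length_eq_dist
  by_cases hnil : p.Nil
  · exact ⟨v, by rw [← hp, Walk.length_eq_zero_iff.mpr hnil]; omega, .inl rfl⟩
  · refine ⟨p.penultimate, ?_, .inr (p.adj_penultimate hnil)⟩
    have := dist_le p.dropLast
    rw [Walk.length_dropLast] at this
    omega

section Finite

variable [Fintype V] [DecidableEq V] [DecidableRel G.Adj]

lemma Connected.card_filter_dist_le_le_pow (hconn : G.Connected) {W : ℕ}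
    (hdeg : ∀ x, G.degree x < W) (u : V) (r : ℕ) :
    #{v | G.dist u v ≤ r} ≤ W ^ r := by
  induction r with
  | zero => simp [hconn.dist_eq_zero_iff, filter_eq]
  | succ r ih =>
    have hsub : ({v | G.dist u v ≤ r + 1} : Finset V) ⊆
        ({x | G.dist u x ≤ r} : Finset V).biUnion fun x => insert x (G.neighborFinset x) := by
      intro v hv
      obtain ⟨x, hx, hxv⟩ := (hconn u v).exists_adj_or_eq_dist_le (by simpa using hv)
      simp only [mem_biUnion, mem_filter, mem_univ, true_and, mem_insert, mem_neighborFinset]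
      exact ⟨x, hx, hxv.imp Eq.symm id⟩
    calc #{v | G.dist u v ≤ r + 1}
        ≤ #{x | G.dist u x ≤ r} * W :=
          (card_le_card hsub).trans <| card_biUnion_le_card_mul _ _ _ fun x _ =>
            (card_insert_le _ _).trans (by rw [card_neighborFinset_eq_degree]; exact hdeg x)
      _ ≤ W ^ r * W := Nat.mul_le_mul_right W ih
      _ = W ^ (r + 1) := (pow_succ W r).symm

lemma Connected.card_le_pow_of_degree_lt_of_dist_le (hconn : G.Connected) {W k : ℕ}
    (hdeg : ∀ x, G.degree x < W) (hdist : ∀ u v, G.dist u v ≤ k) :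
    Fintype.card V ≤ W ^ k := by
  obtain ⟨u⟩ := hconn.nonempty
  simpa [hdist u] using hconn.card_filter_dist_le_le_pow hdeg u k

end Finite

end SimpleGraph

lemma SimpleGraph.Walk.hasInducedCopyG_pathG_of_length_eq_dist {V : Type} {G : SimpleGraph V}
    {u v : V} {p : G.Walk u v} (hp : p.length = G.dist u v) {m : ℕ} (hm : m ≤ p.length + 1) :
    HasInducedCopyG (PathG m) G := by
  refine ⟨fun i => p.getVert i, fun i j hij => ?_, fun i j => ?_⟩
  · exact Fin.ext ((p.isPath_of_length_eq_dist hp).getVert_injOn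
      (by simp; omega) (by simp; omega) hij)
  · rw [pathG_adj]
    constructor
    · intro hadj
      by_contra hfar
      have hne : i.val ≠ j.val := fun h => G.irrefl (Fin.ext h ▸ hadj)
      rcases Nat.lt_or_gt_of_ne hne with h | h
      · exact p.not_adj_getVert_of_length_eq_dist hp (i := i) (j := j) (by omega) (by omega) hadj
      · exact p.not_adj_getVert_of_length_eq_dist hp (i := j) (j := i) (by omega) (by omega)
          hadj.symm
    · rintro (h | h)
      · simpa [← h] using p.adj_getVert_succ (i := i) (by omega)
      · simpa [← h] using (p.adj_getVert_succ (i := j) (by omega)).symm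

lemma SimpleGraph.Reachable.dist_add_two_le_of_not_hasInducedCopyG_pathG {V : Type}
    {G : SimpleGraph V} {u v : V} {n : ℕ} (hP : ¬ HasInducedCopyG (PathG n) G)
    (h : G.Reachable u v) : G.dist u v + 2 ≤ n := by
  obtain ⟨p, hp⟩ := h.exists_walk_length_eq_dist
  by_contra! hn
  exact hP (p.hasInducedCopyG_pathG_of_length_eq_dist hp (by omega))

lemma cpNum_le_card {V : Type} [Fintype V] (E : V → V → Prop) : cpNum E ≤ Fintype.card V := by
  classical
  refine Nat.sInf_le ⟨univ.image fun v => [v], ?_, ?_, ?_, ?_⟩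
  · rw [card_image_of_injective _ fun a b h => List.singleton_inj.mp h, card_univ]
  · simp only [mem_image, mem_univ, true_and, forall_exists_index, forall_apply_eq_imp_iff]
    exact fun v => .inr ⟨by simp, by simp, by simp, List.isChain_singleton _⟩
  · exact fun v => ⟨[v], mem_image_of_mem _ (mem_univ v), List.mem_singleton_self v⟩
  · simp only [mem_image, mem_univ, true_and, forall_exists_index, forall_apply_eq_imp_iff]
    grind

theorem cp_bounded_of_Tn_free_general (n : ℕ) :
    ∃ c : ℕ, ∀ (V : Type) (_ : Fintype V) (E : V → V → Prop),
      (∀ u v : V, E u v → ¬ E v u) →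
      (SimpleGraph.fromRel E).Connected →
      ¬ DigraphHasInducedCopy (TRel n) E →
      ¬ HasInducedCopyG (StarG n) (SimpleGraph.fromRel E) →
      ¬ HasInducedCopyG (PathG n) (SimpleGraph.fromRel E) →
      cpNum E ≤ c := by
  refine ⟨transIndepBound n n ^ (n - 2), fun V _ E hE hconn hT hS hP => ?_⟩
  classical
  have hdist (u v : V) : (SimpleGraph.fromRel E).dist u v ≤ n - 2 := by
    have := (hconn u v).dist_add_two_le_of_not_hasInducedCopyG_pathG hP
    omega
  calc cpNum E ≤ Fintype.card V := cpNum_le_card E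
    _ ≤ transIndepBound n n ^ (n - 2) :=
      hconn.card_le_pow_of_degree_lt_of_dist_le (degree_fromRel_lt_transIndepBound hE hT hS) hdist

/-- For every `n ≥ 2` there is a constant `c₁ = c₁(n)` such that
`cp(D) ≤ c₁` for every weakly connected `T_n`-free digraph `D` whose underlying graph
is `{K_{1,n}, P_n}`-free. -/
theorem cp_bounded_of_Tn_free (n : ℕ) (hn : 2 ≤ n) :
    ∃ c : ℕ, ∀ (V : Type) (_ : Fintype V) (E : V → V → Prop),
      (∀ u v : V, E u v → ¬ E v u) →
      (SimpleGraph.fromRel E).Connected →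
      ¬ DigraphHasInducedCopy (TRel n) E →
      ¬ HasInducedCopyG (StarG n) (SimpleGraph.fromRel E) →
      ¬ HasInducedCopyG (PathG n) (SimpleGraph.fromRel E) →
      cpNum E ≤ c :=
  cp_bounded_of_Tn_free_general n
end

section
/- Let n ≥ 3 be an integer, let G be an {F^(1)_n, F^(2)_n}-free graph, let Q = v_1 v_2 ⋯ v_l be an induced path of G, and let y be a vertex with at least one neighbor on Q such that N_G(y) ∩ V(Q) ⊆ {v_i : n+1 ≤ i ≤ l−n}. Setting i_y = min{i : y v_i ∈ E(G)} and j_y = max{i : y v_i ∈ E(G)}, we have 1 ≤ j_y − i_y ≤ 3. -/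
/-!
`F^(1)_n` is an induced path of order `2n + 1` with a pendant vertex at its centre, and
`F^(2)_n` is an induced path of order `2n` together with a vertex `x₁` adjacent to its two
central vertices and a pendant vertex at `x₁`.

If `y` has a single neighbour `vᵢ` on `Q`, then `Q` itself is such a path with pendant `y` at
`vᵢ`. If `j_y ≥ i_y + 4`, reroute `Q` through `y`: `v₁ ⋯ v_{i_y} y v_{j_y} ⋯ v_l` is again an
induced path. A neighbour `v_m` of `y` with `i_y + 2 ≤ m ≤ j_y - 2` is then a pendant at `y`.
Otherwise `v_{i_y + 1}` is a pendant at `v_{i_y}`, unless it is adjacent to `y`; in that case it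
sees the two consecutive vertices `v_{i_y}, y` of the new path and `v_{i_y + 2}` hangs from it,
giving `F^(2)_n`.
-/

section
variable {V : Type} {G : SimpleGraph V} {m : ℕ} {P : Fin m → V}

theorem IsInducedPathEmb.hasInducedCopy_F1G (hP : IsInducedPathEmb G P) {x : V}
    (hx : x ∉ Set.range P) {n c : ℕ} (hnc : n ≤ c) (hcm : c + n < m)
    (hxP : ∀ k : Fin m, G.Adj x (P k) ↔ k.val = c) : HasInducedCopyG (F1G n) G := by
  obtain ⟨hinj, hadj⟩ := hP
  have hPx : ∀ k, P k ≠ x := fun k h => hx ⟨k, h⟩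
  refine ⟨Sum.elim ![P ⟨c, by omega⟩, x]
    (Sum.elim (fun k => P ⟨c - 1 - k, by omega⟩) (fun k => P ⟨c + 1 + k, by omega⟩)), ?_, ?_⟩
  · rintro (i | k | k) (i' | k' | k') h
    all_goals first | fin_cases i | skip
    all_goals first | fin_cases i' | skip
    all_goals simp [hinj.eq_iff, Fin.ext_iff, hPx, (hPx _).symm] at h ⊢
    all_goals omega
  · rintro (i | k | k) (i' | k' | k')
    all_goals first | fin_cases i | skip
    all_goals first | fin_cases i' | skip
    all_goals simp [F1G, hadj, hxP, G.adj_comm _ x]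
    all_goals omega

theorem IsInducedPathEmb.hasInducedCopy_F2G (hP : IsInducedPathEmb G P) {x₁ x₂ : V}
    (hx₁ : x₁ ∉ Set.range P) (hx₂ : x₂ ∉ Set.range P) (h₁₂ : G.Adj x₁ x₂) {n c : ℕ}
    (hnc : n ≤ c + 1) (hcm : c + 1 + n ≤ m)
    (hx₁P : ∀ k : Fin m, G.Adj x₁ (P k) ↔ k.val = c ∨ k.val = c + 1)
    (hx₂P : ∀ k : Fin m, ¬ G.Adj x₂ (P k)) : HasInducedCopyG (F2G n) G := by
  obtain ⟨hinj, hadj⟩ := hP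
  have hPx₁ : ∀ k, P k ≠ x₁ := fun k h => hx₁ ⟨k, h⟩
  have hPx₂ : ∀ k, P k ≠ x₂ := fun k h => hx₂ ⟨k, h⟩
  refine ⟨Sum.elim ![x₁, x₂]
    (Sum.elim (fun k => P ⟨c - k, by omega⟩) (fun k => P ⟨c + 1 + k, by omega⟩)), ?_, ?_⟩
  · rintro (i | k | k) (i' | k' | k') h
    all_goals first | fin_cases i | skip
    all_goals first | fin_cases i' | skip
    all_goals simp [hinj.eq_iff, Fin.ext_iff, hPx₁, hPx₂, (hPx₁ _).symm, (hPx₂ _).symm,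
      h₁₂.ne, h₁₂.ne.symm] at h ⊢
    all_goals omega
  · rintro (i | k | k) (i' | k' | k')
    all_goals first | fin_cases i | skip
    all_goals first | fin_cases i' | skip
    all_goals simp [F2G, F1G, YZEdgeG, hadj, hx₁P, hx₂P, h₁₂, h₁₂.symm, G.adj_comm _ x₁,
      G.adj_comm _ x₂]
    all_goals omega

end

section
variable {V : Type} {G : SimpleGraph V} {l : ℕ} {v : Fin l → V} {y : V} {i j : Fin l}

/-- The walk `v₀ ⋯ vᵢ y vⱼ ⋯ v_{l-1}`. -/
def detour (v : Fin l → V) (y : V) (i j : Fin l) : Fin (i + 2 + (l - j)) → V := fun k =>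
  if hk : k.val ≤ i then v ⟨k, by omega⟩
  else if k.val = i + 1 then y
  else v ⟨k - (i + 2) + j, by omega⟩

theorem detour_cases (k : Fin (i + 2 + (l - j))) :
    (∃ a : Fin l, a ≤ i ∧ k.val = a ∧ detour v y i j k = v a) ∨
    (k.val = i + 1 ∧ detour v y i j k = y) ∨
    (∃ a : Fin l, j ≤ a ∧ k.val + j = a + i + 2 ∧ detour v y i j k = v a) := by
  unfold detour
  split_ifs with h₁ h₂
  · exact Or.inl ⟨_, h₁, rfl, rfl⟩
  · exact Or.inr (Or.inl ⟨h₂, rfl⟩)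
  · refine Or.inr (Or.inr ⟨_, ?_, ?_, rfl⟩) <;> simp only [Fin.le_def] <;> omega

theorem isInducedPathEmb_detour (hv : IsInducedPathEmb G v) (hy : y ∉ Set.range v)
    (hij : i.val + 2 ≤ j) (hi : G.Adj y (v i)) (hj : G.Adj y (v j))
    (hbetween : ∀ k, G.Adj y (v k) → i ≤ k ∧ k ≤ j) :
    IsInducedPathEmb G (detour v y i j) := by
  obtain ⟨hinj, hadj⟩ := hv
  have hvy : ∀ a, v a ≠ y := fun a h => hy ⟨a, h⟩
  have hyv : ∀ a, a ≤ i ∨ j ≤ a → (G.Adj y (v a) ↔ a.val = i ∨ a.val = j) := fun a ha =>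
    ⟨fun h => by have := hbetween a h; omega, by rintro (h | h) <;> rwa [Fin.ext h]⟩
  refine ⟨fun k k' h => Fin.ext ?_, fun k k' => ?_⟩
  · rcases detour_cases (v := v) (y := y) k with ⟨a, ha, hk, hw⟩ | ⟨hk, hw⟩ | ⟨a, ha, hk, hw⟩ <;>
    rcases detour_cases (v := v) (y := y) k' with ⟨b, hb, hk', hw'⟩ | ⟨hk', hw'⟩ | ⟨b, hb, hk', hw'⟩ <;>
    rw [hw, hw'] at h <;>
    simp only [hinj.eq_iff, Fin.ext_iff, hvy, (hvy _).symm] at h <;>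
    omega
  · rcases detour_cases (v := v) (y := y) k with ⟨a, ha, hk, hw⟩ | ⟨hk, hw⟩ | ⟨a, ha, hk, hw⟩ <;>
    rcases detour_cases (v := v) (y := y) k' with ⟨b, hb, hk', hw'⟩ | ⟨hk', hw'⟩ | ⟨b, hb, hk', hw'⟩ <;>
    rw [hw, hw'] <;>
    try simp only [hadj, G.adj_comm _ y, G.irrefl, false_iff]
    all_goals first | omega | (rw [hyv _ (by omega)]; omega)

theorem adj_detour_iff (hv : IsInducedPathEmb G v) {m : Fin l} (him : i < m) (hmj : m < j)
    (k : Fin (i + 2 + (l - j))) :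
    G.Adj (v m) (detour v y i j k) ↔
      (m.val = i + 1 ∧ k.val = i) ∨ (k.val = i + 1 ∧ G.Adj (v m) y) ∨
        (m.val + 1 = j ∧ k.val = i + 2) := by
  rcases detour_cases (v := v) (y := y) k with ⟨a, ha, hk, hw⟩ | ⟨hk, hw⟩ | ⟨a, ha, hk, hw⟩ <;>
    rw [hw] <;>
    by_cases hmy : G.Adj (v m) y <;>
    simp only [hmy, hv.2, and_true, and_false, false_or, true_iff, false_iff] <;>
    omega

theorem apply_notMem_range_detour (hv : Function.Injective v) (hy : y ∉ Set.range v)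
    {m : Fin l} (him : i < m) (hmj : m < j) : v m ∉ Set.range (detour v y i j) := by
  rintro ⟨k, hk⟩
  rcases detour_cases (v := v) (y := y) k with ⟨a, ha, -, hw⟩ | ⟨-, hw⟩ | ⟨a, ha, -, hw⟩ <;>
    rw [hw] at hk
  · exact absurd (hv hk) (by omega)
  · exact hy ⟨m, hk.symm⟩
  · exact absurd (hv hk) (by omega)

variable {n : ℕ}

theorem lt_of_not_hasInducedCopy_F1G (hF1 : ¬ HasInducedCopyG (F1G n) G)
    (hv : IsInducedPathEmb G v) (hy : y ∉ Set.range v) (hi : G.Adj y (v i))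
    (hbetween : ∀ k, G.Adj y (v k) → i ≤ k ∧ k ≤ j) (hni : n ≤ i) (hin : i.val + n < l) :
    i < j := by
  by_contra hji
  refine hF1 (hv.hasInducedCopy_F1G hy hni hin fun k => ⟨fun hk => ?_, fun hk => ?_⟩)
  · have := hbetween k hk
    omega
  · rwa [Fin.ext hk]

theorem le_add_three_of_not_hasInducedCopy_F1G_F2G (hF1 : ¬ HasInducedCopyG (F1G n) G)
    (hF2 : ¬ HasInducedCopyG (F2G n) G) (hv : IsInducedPathEmb G v) (hy : y ∉ Set.range v)
    (hi : G.Adj y (v i)) (hj : G.Adj y (v j)) (hbetween : ∀ k, G.Adj y (v k) → i ≤ k ∧ k ≤ j)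
    (hni : n ≤ i) (hjn : j.val + n < l) : j.val ≤ i + 3 := by
  by_contra! hfar
  have hP := isInducedPathEmb_detour hv hy (by omega) hi hj hbetween
  by_cases hmid : ∃ m : Fin l, i.val + 2 ≤ m ∧ m.val + 2 ≤ j ∧ G.Adj y (v m)
  · obtain ⟨m, him, hmj, hym⟩ := hmid
    refine hF1 (hP.hasInducedCopy_F1G (apply_notMem_range_detour hv.1 hy (m := m)
      (by omega) (by omega)) (c := i + 1) (by omega) (by omega) fun k => ?_)
    rw [adj_detour_iff hv (by omega) (by omega)]
    simp only [G.adj_comm (v m) y, hym, and_true]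
    omega
  push Not at hmid
  obtain ⟨a, ha⟩ : ∃ a : Fin l, a.val = i + 1 := ⟨⟨i + 1, by omega⟩, rfl⟩
  obtain ⟨b, hb⟩ : ∃ b : Fin l, b.val = i + 2 := ⟨⟨i + 2, by omega⟩, rfl⟩
  have ha_range := apply_notMem_range_detour hv.1 hy (i := i) (j := j) (m := a)
    (by omega) (by omega)
  by_cases hya : G.Adj y (v a)
  · refine hF2 (hP.hasInducedCopy_F2G ha_range
      (apply_notMem_range_detour hv.1 hy (m := b) (by omega) (by omega))
      ((hv.2 a b).2 (by omega)) (c := i) (by omega) (by omega) (fun k => ?_) (fun k => ?_))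
    · rw [adj_detour_iff hv (by omega) (by omega)]
      simp only [G.adj_comm (v a) y, hya, and_true]
      omega
    · rw [adj_detour_iff hv (by omega) (by omega)]
      simp only [G.adj_comm (v b) y, hmid b (by omega) (by omega), and_false, false_or]
      omega
  · refine hF1 (hP.hasInducedCopy_F1G ha_range (c := i) (by omega) (by omega) fun k => ?_)
    rw [adj_detour_iff hv (by omega) (by omega)]
    simp only [G.adj_comm (v a) y, hya, and_false, false_or]
    omega

end

/-- Indices are 0-based: paper index `i` is `i - 1` here. -/
theorem neighbor_indices_spread_general (n : ℕ) (V : Type) (G : SimpleGraph V)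
    (hF1 : ¬ HasInducedCopyG (F1G n) G) (hF2 : ¬ HasInducedCopyG (F2G n) G)
    (l : ℕ) (v : Fin l → V) (hQ : IsInducedPathEmb G v)
    (y : V) (hy : y ∉ Set.range v)
    (hmid : ∀ i : Fin l, G.Adj y (v i) → n ≤ i.val ∧ i.val + n + 1 ≤ l)
    (iy jy : Fin l) (hiy : G.Adj y (v iy)) (hjy : G.Adj y (v jy))
    (hmin : ∀ i : Fin l, G.Adj y (v i) → iy ≤ i)
    (hmax : ∀ i : Fin l, G.Adj y (v i) → i ≤ jy) :
    iy.val + 1 ≤ jy.val ∧ jy.val ≤ iy.val + 3 := by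
  have hbetween : ∀ k, G.Adj y (v k) → iy ≤ k ∧ k ≤ jy := fun k hk => ⟨hmin k hk, hmax k hk⟩
  obtain ⟨hni, hin⟩ := hmid iy hiy
  obtain ⟨-, hjn⟩ := hmid jy hjy
  exact ⟨lt_of_not_hasInducedCopy_F1G hF1 hQ hy hiy hbetween hni (by omega),
    le_add_three_of_not_hasInducedCopy_F1G_F2G hF1 hF2 hQ hy hiy hjy hbetween hni (by omega)⟩

/-- Let `n ≥ 3`, `G` be `{F^(1)_n, F^(2)_n}`-free, `Q = v₁⋯v_l` an
induced path, and `y ∉ V(Q)` with a neighbor on `Q`, all of whose neighbors on `Q` lie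
among `v_{n+1}, …, v_{l−n}`.  If `i_y`, `j_y` are the least and largest indices of
neighbors of `y` on `Q`, then `1 ≤ j_y − i_y ≤ 3`.
(Indices are shifted to be 0-based: paper index `i` corresponds to `i - 1` here.) -/
theorem neighbor_indices_spread (n : ℕ) (hn : 3 ≤ n) (V : Type) (G : SimpleGraph V)
    (hF1 : ¬ HasInducedCopyG (F1G n) G) (hF2 : ¬ HasInducedCopyG (F2G n) G)
    (l : ℕ) (v : Fin l → V) (hQ : IsInducedPathEmb G v)
    (y : V) (hy : y ∉ Set.range v)
    (hmid : ∀ i : Fin l, G.Adj y (v i) → n ≤ i.val ∧ i.val + n + 1 ≤ l)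
    (iy jy : Fin l) (hiy : G.Adj y (v iy)) (hjy : G.Adj y (v jy))
    (hmin : ∀ i : Fin l, G.Adj y (v i) → iy ≤ i)
    (hmax : ∀ i : Fin l, G.Adj y (v i) → i ≤ jy) :
    iy.val + 1 ≤ jy.val ∧ jy.val ≤ iy.val + 3 :=
  neighbor_indices_spread_general n V G hF1 hF2 l v hQ y hy hmid iy jy hiy hjy hmin hmax
end

section
/- Let n ≥ 3 be an integer, let G be an {F^(1)_n, F^(2)_n}-free graph, let Q = v_1 v_2 ⋯ v_l be an induced path of G, and let y, y' be distinct vertices each having at least one neighbor on Q, with (N_G(y) ∪ N_G(y')) ∩ V(Q) ⊆ {v_i : n+1 ≤ i ≤ l−n}. Setting i_z = min{i : z v_i ∈ E(G)} for z ∈ {y,y'}: if i_{y'} ≥ i_y + n + 3, then yy' ∉ E(G). -/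
section helpers
variable {n : ℕ}

lemma F1_xx (a b : Fin 2) : (F1G n).Adj (.inl a) (.inl b) ↔ a.val ≠ b.val := by
  simp only [F1G, SimpleGraph.fromRel_adj, ne_eq, Sum.inl.injEq]
  constructor
  · rintro ⟨h1, h2⟩ h3; rw [Fin.ext_iff] at h1; omega
  · intro h; refine ⟨fun e => h (by rw [e]), by omega⟩

lemma F1_xp (a : Fin 2) (j : Fin n) :
    (F1G n).Adj (.inl a) (.inr (.inl j)) ↔ (a.val = 0 ∧ j.val = 0) := by
  simp [F1G, SimpleGraph.fromRel_adj]

lemma F1_xq (a : Fin 2) (j : Fin n) :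
    (F1G n).Adj (.inl a) (.inr (.inr j)) ↔ (a.val = 0 ∧ j.val = 0) := by
  simp [F1G, SimpleGraph.fromRel_adj]

lemma F1_px (a : Fin 2) (j : Fin n) :
    (F1G n).Adj (.inr (.inl j)) (.inl a) ↔ (a.val = 0 ∧ j.val = 0) := by
  rw [SimpleGraph.adj_comm]; exact F1_xp a j

lemma F1_qx (a : Fin 2) (j : Fin n) :
    (F1G n).Adj (.inr (.inr j)) (.inl a) ↔ (a.val = 0 ∧ j.val = 0) := by
  rw [SimpleGraph.adj_comm]; exact F1_xq a j

lemma F1_pp (i j : Fin n) :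
    (F1G n).Adj (.inr (.inl i)) (.inr (.inl j)) ↔ (i.val + 1 = j.val ∨ j.val + 1 = i.val) := by
  simp only [F1G, SimpleGraph.fromRel_adj, ne_eq, Sum.inr.injEq, Sum.inl.injEq]
  constructor
  · rintro ⟨h1, h2⟩; exact h2
  · intro h; refine ⟨fun e => ?_, h⟩; rw [Fin.ext_iff] at e; omega

lemma F1_qq (i j : Fin n) :
    (F1G n).Adj (.inr (.inr i)) (.inr (.inr j)) ↔ (i.val + 1 = j.val ∨ j.val + 1 = i.val) := by
  simp only [F1G, SimpleGraph.fromRel_adj, ne_eq, Sum.inr.injEq]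
  constructor
  · rintro ⟨h1, h2⟩; exact h2
  · intro h; refine ⟨fun e => ?_, h⟩; rw [Fin.ext_iff] at e; omega

lemma F1_pq (i j : Fin n) :
    (F1G n).Adj (.inr (.inl i)) (.inr (.inr j)) ↔ False := by
  simp [F1G, SimpleGraph.fromRel_adj]

lemma F1_qp (i j : Fin n) :
    (F1G n).Adj (.inr (.inr i)) (.inr (.inl j)) ↔ False := by
  rw [SimpleGraph.adj_comm]; exact F1_pq j i

lemma YZ_xx (a b : Fin 2) : (YZEdgeG n).Adj (.inl a) (.inl b) ↔ False := by
  simp [YZEdgeG, SimpleGraph.fromRel_adj]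
lemma YZ_xp (a : Fin 2) (j : Fin n) : (YZEdgeG n).Adj (.inl a) (.inr (.inl j)) ↔ False := by
  simp [YZEdgeG, SimpleGraph.fromRel_adj]
lemma YZ_xq (a : Fin 2) (j : Fin n) : (YZEdgeG n).Adj (.inl a) (.inr (.inr j)) ↔ False := by
  simp [YZEdgeG, SimpleGraph.fromRel_adj]
lemma YZ_px (a : Fin 2) (j : Fin n) : (YZEdgeG n).Adj (.inr (.inl j)) (.inl a) ↔ False := by
  rw [SimpleGraph.adj_comm]; exact YZ_xp a j
lemma YZ_qx (a : Fin 2) (j : Fin n) : (YZEdgeG n).Adj (.inr (.inr j)) (.inl a) ↔ False := by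
  rw [SimpleGraph.adj_comm]; exact YZ_xq a j
lemma YZ_pp (i j : Fin n) : (YZEdgeG n).Adj (.inr (.inl i)) (.inr (.inl j)) ↔ False := by
  simp [YZEdgeG, SimpleGraph.fromRel_adj]
lemma YZ_qq (i j : Fin n) : (YZEdgeG n).Adj (.inr (.inr i)) (.inr (.inr j)) ↔ False := by
  simp [YZEdgeG, SimpleGraph.fromRel_adj]
lemma YZ_pq (i j : Fin n) :
    (YZEdgeG n).Adj (.inr (.inl i)) (.inr (.inr j)) ↔ (i.val = 0 ∧ j.val = 0) := by
  simp [YZEdgeG, SimpleGraph.fromRel_adj]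
lemma YZ_qp (i j : Fin n) :
    (YZEdgeG n).Adj (.inr (.inr i)) (.inr (.inl j)) ↔ (j.val = 0 ∧ i.val = 0) := by
  rw [SimpleGraph.adj_comm]; exact YZ_pq j i

lemma F2_xx (a b : Fin 2) : (F2G n).Adj (.inl a) (.inl b) ↔ a.val ≠ b.val := by
  rw [F2G, SimpleGraph.sup_adj, F1_xx, YZ_xx]; tauto
lemma F2_xp (a : Fin 2) (j : Fin n) :
    (F2G n).Adj (.inl a) (.inr (.inl j)) ↔ (a.val = 0 ∧ j.val = 0) := by
  rw [F2G, SimpleGraph.sup_adj, F1_xp, YZ_xp]; tauto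
lemma F2_xq (a : Fin 2) (j : Fin n) :
    (F2G n).Adj (.inl a) (.inr (.inr j)) ↔ (a.val = 0 ∧ j.val = 0) := by
  rw [F2G, SimpleGraph.sup_adj, F1_xq, YZ_xq]; tauto
lemma F2_px (a : Fin 2) (j : Fin n) :
    (F2G n).Adj (.inr (.inl j)) (.inl a) ↔ (a.val = 0 ∧ j.val = 0) := by
  rw [SimpleGraph.adj_comm]; exact F2_xp a j
lemma F2_qx (a : Fin 2) (j : Fin n) :
    (F2G n).Adj (.inr (.inr j)) (.inl a) ↔ (a.val = 0 ∧ j.val = 0) := by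
  rw [SimpleGraph.adj_comm]; exact F2_xq a j
lemma F2_pp (i j : Fin n) :
    (F2G n).Adj (.inr (.inl i)) (.inr (.inl j)) ↔ (i.val + 1 = j.val ∨ j.val + 1 = i.val) := by
  rw [F2G, SimpleGraph.sup_adj, F1_pp, YZ_pp]; tauto
lemma F2_qq (i j : Fin n) :
    (F2G n).Adj (.inr (.inr i)) (.inr (.inr j)) ↔ (i.val + 1 = j.val ∨ j.val + 1 = i.val) := by
  rw [F2G, SimpleGraph.sup_adj, F1_qq, YZ_qq]; tauto
lemma F2_pq (i j : Fin n) :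
    (F2G n).Adj (.inr (.inl i)) (.inr (.inr j)) ↔ (i.val = 0 ∧ j.val = 0) := by
  rw [F2G, SimpleGraph.sup_adj, F1_pq, YZ_pq]; tauto
lemma F2_qp (i j : Fin n) :
    (F2G n).Adj (.inr (.inr i)) (.inr (.inl j)) ↔ (j.val = 0 ∧ i.val = 0) := by
  rw [SimpleGraph.adj_comm]; exact F2_pq j i

end helpers

lemma aux_master {V : Type} {n : ℕ} (hn : 0 < n) (G : SimpleGraph V)
    (c d : V) (p q : Fin n → V)
    (hcd : c ≠ d) (hcp : ∀ i, c ≠ p i) (hcq : ∀ i, c ≠ q i)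
    (hdp : ∀ i, d ≠ p i) (hdq : ∀ i, d ≠ q i)
    (hpq : ∀ i j, p i ≠ q j)
    (hpinj : Function.Injective p) (hqinj : Function.Injective q)
    (acd : G.Adj c d)
    (acp : ∀ i : Fin n, G.Adj c (p i) ↔ i.val = 0)
    (acq : ∀ i : Fin n, G.Adj c (q i) ↔ i.val = 0)
    (adp : ∀ i, ¬ G.Adj d (p i)) (adq : ∀ i, ¬ G.Adj d (q i))
    (app : ∀ i j, G.Adj (p i) (p j) ↔ (i.val + 1 = j.val ∨ j.val + 1 = i.val))
    (aqq : ∀ i j, G.Adj (q i) (q j) ↔ (i.val + 1 = j.val ∨ j.val + 1 = i.val))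
    (apq : ∀ i j : Fin n, G.Adj (p i) (q j) → i.val = 0 ∧ j.val = 0) :
    HasInducedCopyG (F1G n) G ∨ HasInducedCopyG (F2G n) G := by
  classical
  set f : Fin 2 ⊕ Fin n ⊕ Fin n → V := fun x =>
    match x with
    | Sum.inl a => if a.val = 0 then c else d
    | Sum.inr (Sum.inl i) => p i
    | Sum.inr (Sum.inr i) => q i with hfdef
  have hfl0 : ∀ a : Fin 2, a.val = 0 → f (Sum.inl a) = c := by
    intro a ha; simp only [f]; rw [if_pos ha]
  have hfl1 : ∀ a : Fin 2, a.val ≠ 0 → f (Sum.inl a) = d := by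
    intro a ha; simp only [f]; rw [if_neg ha]
  have hfp : ∀ i, f (Sum.inr (Sum.inl i)) = p i := fun _ => rfl
  have hfq : ∀ i, f (Sum.inr (Sum.inr i)) = q i := fun _ => rfl
  have hfinj : Function.Injective f := by
    rintro (a | i | i) (b | j | j) h
    · by_cases ha : a.val = 0 <;> by_cases hb : b.val = 0
      · exact congrArg Sum.inl (Fin.ext (ha.trans hb.symm))
      · rw [hfl0 a ha, hfl1 b hb] at h; exact absurd h hcd
      · rw [hfl1 a ha, hfl0 b hb] at h; exact absurd h.symm hcd
      · exact congrArg Sum.inl (Fin.ext (by omega))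
    · by_cases ha : a.val = 0
      · rw [hfl0 a ha, hfp] at h; exact absurd h (hcp j)
      · rw [hfl1 a ha, hfp] at h; exact absurd h (hdp j)
    · by_cases ha : a.val = 0
      · rw [hfl0 a ha, hfq] at h; exact absurd h (hcq j)
      · rw [hfl1 a ha, hfq] at h; exact absurd h (hdq j)
    · by_cases hb : b.val = 0
      · rw [hfl0 b hb, hfp] at h; exact absurd h.symm (hcp i)
      · rw [hfl1 b hb, hfp] at h; exact absurd h.symm (hdp i)
    · exact congrArg (fun t => Sum.inr (Sum.inl t)) (hpinj h)
    · exact absurd h (hpq i j)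
    · by_cases hb : b.val = 0
      · rw [hfl0 b hb, hfq] at h; exact absurd h.symm (hcq i)
      · rw [hfl1 b hb, hfq] at h; exact absurd h.symm (hdq i)
    · exact absurd h.symm (hpq j i)
    · exact congrArg (fun t => Sum.inr (Sum.inr t)) (hqinj h)
  by_cases htip : G.Adj (p ⟨0, hn⟩) (q ⟨0, hn⟩)
  · right
    refine ⟨f, hfinj, ?_⟩
    rintro (a | i | i) (b | j | j)
    · rw [F2_xx]
      by_cases ha : a.val = 0 <;> by_cases hb : b.val = 0
      · rw [hfl0 a ha, hfl0 b hb]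
        exact iff_of_false (G.irrefl) (by omega)
      · rw [hfl0 a ha, hfl1 b hb]; exact iff_of_true acd (by omega)
      · rw [hfl1 a ha, hfl0 b hb]; exact iff_of_true acd.symm (by omega)
      · rw [hfl1 a ha, hfl1 b hb]; exact iff_of_false (G.irrefl) (by omega)
    · rw [F2_xp, hfp]
      by_cases ha : a.val = 0
      · rw [hfl0 a ha]; rw [acp j]; simp [ha]
      · rw [hfl1 a ha]; exact iff_of_false (adp j) (fun h => ha h.1)
    · rw [F2_xq, hfq]
      by_cases ha : a.val = 0
      · rw [hfl0 a ha]; rw [acq j]; simp [ha]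
      · rw [hfl1 a ha]; exact iff_of_false (adq j) (fun h => ha h.1)
    · rw [F2_px, hfp, G.adj_comm]
      by_cases hb : b.val = 0
      · rw [hfl0 b hb]; rw [acp i]; simp [hb]
      · rw [hfl1 b hb]; exact iff_of_false (adp i) (fun h => hb h.1)
    · rw [F2_pp, hfp, hfp]; exact app i j
    · rw [F2_pq, hfp, hfq]
      constructor
      · exact apq i j
      · rintro ⟨hi, hj⟩
        have : i = ⟨0, hn⟩ := Fin.ext hi
        have hj' : j = ⟨0, hn⟩ := Fin.ext hj
        rw [this, hj']; exact htip
    · rw [F2_qx, hfq, G.adj_comm]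
      by_cases hb : b.val = 0
      · rw [hfl0 b hb]; rw [acq i]; simp [hb]
      · rw [hfl1 b hb]; exact iff_of_false (adq i) (fun h => hb h.1)
    · rw [F2_qp, hfq, hfp, G.adj_comm]
      constructor
      · exact apq j i
      · rintro ⟨hj, hi⟩
        have : i = ⟨0, hn⟩ := Fin.ext hi
        have hj' : j = ⟨0, hn⟩ := Fin.ext hj
        rw [this, hj']; exact htip
    · rw [F2_qq, hfq, hfq]; exact aqq i j
  · left
    refine ⟨f, hfinj, ?_⟩
    rintro (a | i | i) (b | j | j)
    · rw [F1_xx]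
      by_cases ha : a.val = 0 <;> by_cases hb : b.val = 0
      · rw [hfl0 a ha, hfl0 b hb]; exact iff_of_false (G.irrefl) (by omega)
      · rw [hfl0 a ha, hfl1 b hb]; exact iff_of_true acd (by omega)
      · rw [hfl1 a ha, hfl0 b hb]; exact iff_of_true acd.symm (by omega)
      · rw [hfl1 a ha, hfl1 b hb]; exact iff_of_false (G.irrefl) (by omega)
    · rw [F1_xp, hfp]
      by_cases ha : a.val = 0
      · rw [hfl0 a ha]; rw [acp j]; simp [ha]
      · rw [hfl1 a ha]; exact iff_of_false (adp j) (fun h => ha h.1)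
    · rw [F1_xq, hfq]
      by_cases ha : a.val = 0
      · rw [hfl0 a ha]; rw [acq j]; simp [ha]
      · rw [hfl1 a ha]; exact iff_of_false (adq j) (fun h => ha h.1)
    · rw [F1_px, hfp, G.adj_comm]
      by_cases hb : b.val = 0
      · rw [hfl0 b hb]; rw [acp i]; simp [hb]
      · rw [hfl1 b hb]; exact iff_of_false (adp i) (fun h => hb h.1)
    · rw [F1_pp, hfp, hfp]; exact app i j
    · rw [F1_pq, hfp, hfq]
      refine iff_of_false (fun h => ?_) (fun h => h)
      obtain ⟨hi, hj⟩ := apq i j h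
      have : i = ⟨0, hn⟩ := Fin.ext hi
      have hj' : j = ⟨0, hn⟩ := Fin.ext hj
      rw [this, hj'] at h; exact htip h
    · rw [F1_qx, hfq, G.adj_comm]
      by_cases hb : b.val = 0
      · rw [hfl0 b hb]; rw [acq i]; simp [hb]
      · rw [hfl1 b hb]; exact iff_of_false (adq i) (fun h => hb h.1)
    · rw [F1_qp, hfq, hfp, G.adj_comm]
      refine iff_of_false (fun h => ?_) (fun h => h)
      obtain ⟨hj, hi⟩ := apq j i h
      have : j = ⟨0, hn⟩ := Fin.ext hj
      have hi' : i = ⟨0, hn⟩ := Fin.ext hi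
      rw [this, hi'] at h; exact htip h
    · rw [F1_qq, hfq, hfq]; exact aqq i j

def vAt {V : Type} {l : ℕ} (v : Fin l → V) (k : ℕ) (h : k < l) : V := v ⟨k, h⟩


/-- Let `n ≥ 3`, `G` be `{F^(1)_n, F^(2)_n}`-free, `Q = v₁⋯v_l` an
induced path, and `y ≠ y'` vertices off `Q`, each with a neighbor on `Q`, all of whose
neighbors on `Q` lie among `v_{n+1}, …, v_{l−n}`.  If `i_{y'} ≥ i_y + n + 3` then
`yy' ∉ E(G)`.  (Indices are shifted to be 0-based.) -/
theorem far_attachments_nonadjacent (n : ℕ) (hn : 3 ≤ n) (V : Type) (G : SimpleGraph V)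
    (hF1 : ¬ HasInducedCopyG (F1G n) G) (hF2 : ¬ HasInducedCopyG (F2G n) G)
    (l : ℕ) (v : Fin l → V) (hQ : IsInducedPathEmb G v)
    (y y' : V) (hne : y ≠ y') (hy : y ∉ Set.range v) (hy' : y' ∉ Set.range v)
    (hmid : ∀ i : Fin l, G.Adj y (v i) → n ≤ i.val ∧ i.val + n + 1 ≤ l)
    (hmid' : ∀ i : Fin l, G.Adj y' (v i) → n ≤ i.val ∧ i.val + n + 1 ≤ l)
    (iy : Fin l) (hiy : G.Adj y (v iy)) (hmin : ∀ i : Fin l, G.Adj y (v i) → iy ≤ i)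
    (iy' : Fin l) (hiy' : G.Adj y' (v iy'))
    (hmin' : ∀ i : Fin l, G.Adj y' (v i) → iy' ≤ i)
    (hfar : iy.val + n + 3 ≤ iy'.val) :
    ¬ G.Adj y y' := by
  classical
  obtain ⟨hvinj, hvadj⟩ := hQ
  intro hadj
  have hyne : ∀ (k : ℕ) (hk : k < l), y ≠ vAt v k hk := by
    intro k hk h; exact hy ⟨⟨k, hk⟩, h.symm⟩
  have hy'nev : ∀ (k : ℕ) (hk : k < l), y' ≠ vAt v k hk := by
    intro k hk h; exact hy' ⟨⟨k, hk⟩, h.symm⟩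
  have hvne : ∀ (a b : ℕ) (ha : a < l) (hb : b < l), a ≠ b → vAt v a ha ≠ vAt v b hb := by
    intro a b ha hb hab h
    have h2 := hvinj h
    rw [Fin.mk.injEq] at h2
    exact hab h2
  have hvv : ∀ (a b : ℕ) (ha : a < l) (hb : b < l),
      G.Adj (vAt v a ha) (vAt v b hb) ↔ (a + 1 = b ∨ b + 1 = a) :=
    fun a b ha hb => hvadj ⟨a, ha⟩ ⟨b, hb⟩
  obtain ⟨j, hj, hmax⟩ : ∃ j : Fin l, G.Adj y (v j) ∧ ∀ i : Fin l, G.Adj y (v i) → i ≤ j := by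
    obtain ⟨j, hjmem, hjmax⟩ := Finset.exists_max_image
      (Finset.univ.filter (fun i : Fin l => G.Adj y (v i))) id ⟨iy, by simp [hiy]⟩
    refine ⟨j, by simpa using hjmem, fun i hi => ?_⟩
    simpa using hjmax i (by simp [hi])
  set I := iy.val with hIdef
  set J := j.val with hJdef
  set I' := iy'.val with hI'def
  obtain ⟨hIn, hIl⟩ := hmid iy hiy
  obtain ⟨hJn, hJl⟩ := hmid j hj
  obtain ⟨hI'n, hI'l⟩ := hmid' iy' hiy'
  have hIJ : I ≤ J := hmin j hj
  have hIlt : I < l := iy.isLt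
  have hJlt : J < l := j.isLt
  have hyAdj : ∀ (k : ℕ) (hk : k < l), G.Adj y (vAt v k hk) → I ≤ k ∧ k ≤ J := by
    intro k hk h
    have h1 : I ≤ k := hmin ⟨k, hk⟩ h
    have h2 : k ≤ J := hmax ⟨k, hk⟩ h
    exact ⟨h1, h2⟩
  have hyAdjI : ∀ (k : ℕ) (hk : k < l), k = I → G.Adj y (vAt v k hk) := by
    intro k hk hkI
    have e : (⟨k, hk⟩ : Fin l) = iy := Fin.ext hkI
    show G.Adj y (v ⟨k, hk⟩)
    rw [e]; exact hiy
  have hyAdjJ : ∀ (k : ℕ) (hk : k < l), k = J → G.Adj y (vAt v k hk) := by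
    intro k hk hkJ
    have e : (⟨k, hk⟩ : Fin l) = j := Fin.ext hkJ
    show G.Adj y (v ⟨k, hk⟩)
    rw [e]; exact hj
  have hy'Adj : ∀ (k : ℕ) (hk : k < l), k < I' → ¬ G.Adj y' (vAt v k hk) := by
    intro k hk hlt h
    have h1 : I' ≤ k := hmin' ⟨k, hk⟩ h
    omega
  -- the bent arm (used in cases P and Q)
  set qb : Fin n → V := fun i => if i.val = 0 then y else vAt v (I - (i.val - 1)) (by omega)
    with hqb
  have hq0 : ∀ i : Fin n, i.val = 0 → qb i = y := by
    intro i hi; simp only [hqb]; rw [if_pos hi]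
  have hqpos : ∀ (i : Fin n), i.val ≠ 0 → qb i = vAt v (I - (i.val - 1)) (by omega) := by
    intro i hi; simp only [hqb]; rw [if_neg hi]
  have hbadj : ∀ i j : Fin n, G.Adj (qb i) (qb j) ↔ (i.val + 1 = j.val ∨ j.val + 1 = i.val) := by
    intro i j
    by_cases hi : i.val = 0 <;> by_cases hj2 : j.val = 0
    · rw [hq0 i hi, hq0 j hj2]
      exact iff_of_false (G.irrefl) (by omega)
    · rw [hq0 i hi, hqpos j hj2]
      constructor
      · intro h; have := (hyAdj _ _ h).1; omega
      · intro h; exact hyAdjI _ _ (by omega)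
    · rw [hqpos i hi, hq0 j hj2, G.adj_comm]
      constructor
      · intro h; have := (hyAdj _ _ h).1; omega
      · intro h; exact hyAdjI _ _ (by omega)
    · rw [hqpos i hi, hqpos j hj2, hvv]
      omega
  have hbinj : Function.Injective qb := by
    intro i j h
    by_cases hi : i.val = 0 <;> by_cases hj2 : j.val = 0
    · exact Fin.ext (by omega)
    · rw [hq0 i hi, hqpos j hj2] at h; exact absurd h (hyne _ _)
    · rw [hqpos i hi, hq0 j hj2] at h; exact absurd h.symm (hyne _ _)
    · rw [hqpos i hi, hqpos j hj2] at h
      have h2 := hvinj h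
      rw [Fin.mk.injEq] at h2
      exact Fin.ext (by omega)
  rcases Nat.lt_or_ge J (I + 2) with hc | hc
  · rcases Nat.lt_or_ge J (I + 1) with hc1 | hc1
    · -- Case C1 : J = I
      refine (aux_master (show 0 < n by omega) G (vAt v I hIlt) y
        (fun i : Fin n => vAt v (I + 1 + i.val) (by omega))
        (fun i : Fin n => vAt v (I - 1 - i.val) (by omega))
        ?_ ?_ ?_ ?_ ?_ ?_ ?_ ?_ ?_ ?_ ?_ ?_ ?_ ?_ ?_ ?_).elim hF1 hF2
      · exact (hyne I hIlt).symm
      · intro i; exact hvne _ _ _ _ (by omega)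
      · intro i; exact hvne _ _ _ _ (by omega)
      · intro i; exact hyne _ _
      · intro i; exact hyne _ _
      · intro i j; exact hvne _ _ _ _ (by omega)
      · intro i j h; have h2 := hvinj h; rw [Fin.mk.injEq] at h2; exact Fin.ext (by omega)
      · intro i j h; have h2 := hvinj h; rw [Fin.mk.injEq] at h2; exact Fin.ext (by omega)
      · exact (hyAdjI I hIlt rfl).symm
      · intro i; exact (hvv _ _ _ _).trans (by omega)
      · intro i; exact (hvv _ _ _ _).trans (by omega)
      · intro i h; have := (hyAdj _ _ h).2; omega
      · intro i h; have := (hyAdj _ _ h).1; omega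
      · intro i k; exact (hvv _ _ _ _).trans (by omega)
      · intro i k; exact (hvv _ _ _ _).trans (by omega)
      · intro i k h; have := (hvv _ _ _ _).mp h; omega
    · -- Case B : J = I + 1
      refine (aux_master (show 0 < n by omega) G y y'
        (fun i : Fin n => vAt v (I + 1 + i.val) (by omega))
        (fun i : Fin n => vAt v (I - i.val) (by omega))
        ?_ ?_ ?_ ?_ ?_ ?_ ?_ ?_ ?_ ?_ ?_ ?_ ?_ ?_ ?_ ?_).elim hF1 hF2
      · exact hne
      · intro i; exact hyne _ _
      · intro i; exact hyne _ _
      · intro i; exact hy'nev _ _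
      · intro i; exact hy'nev _ _
      · intro i k; exact hvne _ _ _ _ (by omega)
      · intro i k h; have h2 := hvinj h; rw [Fin.mk.injEq] at h2; exact Fin.ext (by omega)
      · intro i k h; have h2 := hvinj h; rw [Fin.mk.injEq] at h2; exact Fin.ext (by omega)
      · exact hadj
      · intro i
        constructor
        · intro h; have := (hyAdj _ _ h).2; omega
        · intro h; exact hyAdjJ _ _ (by omega)
      · intro i
        constructor
        · intro h; have := (hyAdj _ _ h).1; omega
        · intro h; exact hyAdjI _ _ (by omega)
      · intro i h; exact hy'Adj _ _ (by omega) h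
      · intro i h; exact hy'Adj _ _ (by omega) h
      · intro i k; exact (hvv _ _ _ _).trans (by omega)
      · intro i k; exact (hvv _ _ _ _).trans (by omega)
      · intro i k h; have := (hvv _ _ _ _).mp h; omega
  · rcases le_or_gt (J + n) I' with hc2 | hc2
    · -- Case C2a
      refine (aux_master (show 0 < n by omega) G y y'
        (fun i : Fin n => vAt v (J + i.val) (by omega))
        (fun i : Fin n => vAt v (I - i.val) (by omega))
        ?_ ?_ ?_ ?_ ?_ ?_ ?_ ?_ ?_ ?_ ?_ ?_ ?_ ?_ ?_ ?_).elim hF1 hF2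
      · exact hne
      · intro i; exact hyne _ _
      · intro i; exact hyne _ _
      · intro i; exact hy'nev _ _
      · intro i; exact hy'nev _ _
      · intro i k; exact hvne _ _ _ _ (by omega)
      · intro i k h; have h2 := hvinj h; rw [Fin.mk.injEq] at h2; exact Fin.ext (by omega)
      · intro i k h; have h2 := hvinj h; rw [Fin.mk.injEq] at h2; exact Fin.ext (by omega)
      · exact hadj
      · intro i
        constructor
        · intro h; have := (hyAdj _ _ h).2; omega
        · intro h; exact hyAdjJ _ _ (by omega)
      · intro i
        constructor
        · intro h; have := (hyAdj _ _ h).1; omega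
        · intro h; exact hyAdjI _ _ (by omega)
      · intro i h; exact hy'Adj _ _ (by omega) h
      · intro i h; exact hy'Adj _ _ (by omega) h
      · intro i k; exact (hvv _ _ _ _).trans (by omega)
      · intro i k; exact (hvv _ _ _ _).trans (by omega)
      · intro i k h; have := (hvv _ _ _ _).mp h; omega
    · -- J + n > I', hence J ≥ I + 4
      have hJ4 : I + 4 ≤ J := by omega
      by_cases h4a : G.Adj y (vAt v (J - 1) (by omega))
      · by_cases h4b : G.Adj y (vAt v (J - 2) (by omega))
        · -- Case C2x
          refine (aux_master (show 0 < n by omega) G y (vAt v (J - 2) (by omega))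
            (fun i : Fin n => vAt v (J + i.val) (by omega))
            (fun i : Fin n => vAt v (I - i.val) (by omega))
            ?_ ?_ ?_ ?_ ?_ ?_ ?_ ?_ ?_ ?_ ?_ ?_ ?_ ?_ ?_ ?_).elim hF1 hF2
          · exact hyne _ _
          · intro i; exact hyne _ _
          · intro i; exact hyne _ _
          · intro i; exact hvne _ _ _ _ (by omega)
          · intro i; exact hvne _ _ _ _ (by omega)
          · intro i k; exact hvne _ _ _ _ (by omega)
          · intro i k h; have h2 := hvinj h; rw [Fin.mk.injEq] at h2; exact Fin.ext (by omega)
          · intro i k h; have h2 := hvinj h; rw [Fin.mk.injEq] at h2; exact Fin.ext (by omega)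
          · exact h4b
          · intro i
            constructor
            · intro h; have := (hyAdj _ _ h).2; omega
            · intro h; exact hyAdjJ _ _ (by omega)
          · intro i
            constructor
            · intro h; have := (hyAdj _ _ h).1; omega
            · intro h; exact hyAdjI _ _ (by omega)
          · intro i h; have := (hvv _ _ _ _).mp h; omega
          · intro i h; have := (hvv _ _ _ _).mp h; omega
          · intro i k; exact (hvv _ _ _ _).trans (by omega)
          · intro i k; exact (hvv _ _ _ _).trans (by omega)
          · intro i k h; have := (hvv _ _ _ _).mp h; omega
        · -- Case Q
          refine (aux_master (show 0 < n by omega) G (vAt v (J - 1) (by omega))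
            (vAt v (J - 2) (by omega))
            (fun i : Fin n => vAt v (J + i.val) (by omega))
            qb
            ?_ ?_ ?_ ?_ ?_ ?_ ?_ ?_ ?_ ?_ ?_ ?_ ?_ ?_ ?_ ?_).elim hF1 hF2
          · exact hvne _ _ _ _ (by omega)
          · intro i; exact hvne _ _ _ _ (by omega)
          · intro i
            by_cases hi : i.val = 0
            · rw [hq0 i hi]; exact (hyne _ _).symm
            · rw [hqpos i hi]; exact hvne _ _ _ _ (by omega)
          · intro i; exact hvne _ _ _ _ (by omega)
          · intro i
            by_cases hi : i.val = 0
            · rw [hq0 i hi]; exact (hyne _ _).symm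
            · rw [hqpos i hi]; exact hvne _ _ _ _ (by omega)
          · intro i k
            by_cases hk : k.val = 0
            · rw [hq0 k hk]; exact (hyne _ _).symm
            · rw [hqpos k hk]; exact hvne _ _ _ _ (by omega)
          · intro i k h; have h2 := hvinj h; rw [Fin.mk.injEq] at h2; exact Fin.ext (by omega)
          · exact hbinj
          · exact (hvv _ _ _ _).mpr (by omega)
          · intro i; exact (hvv _ _ _ _).trans (by omega)
          · intro i
            by_cases hi : i.val = 0
            · rw [hq0 i hi]; exact iff_of_true h4a.symm hi
            · rw [hqpos i hi]
              exact iff_of_false (fun h => by have := (hvv _ _ _ _).mp h; omega) hi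
          · intro i h; have := (hvv _ _ _ _).mp h; omega
          · intro i
            by_cases hi : i.val = 0
            · rw [hq0 i hi]; exact fun h => h4b h.symm
            · rw [hqpos i hi]; intro h; have := (hvv _ _ _ _).mp h; omega
          · intro i k; exact (hvv _ _ _ _).trans (by omega)
          · exact hbadj
          · intro i k h
            by_cases hk : k.val = 0
            · rw [hq0 k hk] at h
              have := (hyAdj _ _ h.symm).2
              omega
            · rw [hqpos k hk] at h
              have := (hvv _ _ _ _).mp h; omega
      · -- Case P
        refine (aux_master (show 0 < n by omega) G (vAt v J hJlt)
          (vAt v (J - 1) (by omega))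
          (fun i : Fin n => vAt v (J + 1 + i.val) (by omega))
          qb
          ?_ ?_ ?_ ?_ ?_ ?_ ?_ ?_ ?_ ?_ ?_ ?_ ?_ ?_ ?_ ?_).elim hF1 hF2
        · exact hvne _ _ _ _ (by omega)
        · intro i; exact hvne _ _ _ _ (by omega)
        · intro i
          by_cases hi : i.val = 0
          · rw [hq0 i hi]; exact (hyne _ _).symm
          · rw [hqpos i hi]; exact hvne _ _ _ _ (by omega)
        · intro i; exact hvne _ _ _ _ (by omega)
        · intro i
          by_cases hi : i.val = 0
          · rw [hq0 i hi]; exact (hyne _ _).symm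
          · rw [hqpos i hi]; exact hvne _ _ _ _ (by omega)
        · intro i k
          by_cases hk : k.val = 0
          · rw [hq0 k hk]; exact (hyne _ _).symm
          · rw [hqpos k hk]; exact hvne _ _ _ _ (by omega)
        · intro i k h; have h2 := hvinj h; rw [Fin.mk.injEq] at h2; exact Fin.ext (by omega)
        · exact hbinj
        · exact (hvv _ _ _ _).mpr (by omega)
        · intro i; exact (hvv _ _ _ _).trans (by omega)
        · intro i
          by_cases hi : i.val = 0
          · rw [hq0 i hi]; exact iff_of_true (hyAdjJ J hJlt rfl).symm hi
          · rw [hqpos i hi]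
            exact iff_of_false (fun h => by have := (hvv _ _ _ _).mp h; omega) hi
        · intro i h; have := (hvv _ _ _ _).mp h; omega
        · intro i
          by_cases hi : i.val = 0
          · rw [hq0 i hi]; exact fun h => h4a h.symm
          · rw [hqpos i hi]; intro h; have := (hvv _ _ _ _).mp h; omega
        · intro i k; exact (hvv _ _ _ _).trans (by omega)
        · exact hbadj
        · intro i k h
          by_cases hk : k.val = 0
          · rw [hq0 k hk] at h
            have := (hyAdj _ _ h.symm).2
            omega
          · rw [hqpos k hk] at h
            have := (hvv _ _ _ _).mp h; omega
end

section
/- Let n ≥ 3 be an integer, let G be an {F^(1)_n, F^(2)_n, F^(3)_n, F^(4)_n}-free graph, let Q = v_1 v_2 ⋯ v_l be an induced path of G, and let y, y' be distinct vertices each having at least one neighbor on Q, with (N_G(y) ∪ N_G(y')) ∩ V(Q) ⊆ {v_i : n+1 ≤ i ≤ l−n}. Setting i_z = min{i : z v_i ∈ E(G)} for z ∈ {y,y'}: if i_y = i_{y'}, then yy' ∈ E(G). -/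
/-! Suppose `y ≁ y'` and let `a = i_y = i_{y'}`. A vertex whose only neighbour on `Q` is `v_a`
would complete the segment `v_{a-n} ⋯ v_{a+n}` of `Q` to an induced `F^(1)_n`, so both `y`
and `y'` have a neighbour on `Q` after `v_a`. Let `v_b` be the last neighbour of `y` or `y'`
on `Q`. If both see `v_b`, then `y, y'` with the legs `v_a v_{a-1} ⋯` and `v_b v_{b+1} ⋯` form
an induced `F^(3)_n`, or `F^(4)_n` when `b = a + 1`. If only `y` sees `v_b`, then `v_a` with
the legs `v_{a-1} v_{a-2} ⋯` and `y v_b v_{b+1} ⋯` and the pendant vertex `y'` form an induced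
`F^(1)_n` (here `b ≥ a + 2`, since `y'` has a neighbour strictly between `v_a` and `v_b`). -/

open Function

section InducedCopy

variable {α β γ V : Type} {G : SimpleGraph V}

theorem hasInducedCopyG_sumElim {H : SimpleGraph (α ⊕ β ⊕ γ)} {x : α → V} {p : β → V}
    {q : γ → V} (hx : Injective x) (hp : Injective p) (hq : Injective q)
    (hxp : ∀ i j, x i ≠ p j) (hxq : ∀ i j, x i ≠ q j) (hpq : ∀ i j, p i ≠ q j)
    (hxx' : ∀ i j, G.Adj (x i) (x j) ↔ H.Adj (.inl i) (.inl j))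
    (hxp' : ∀ i j, G.Adj (x i) (p j) ↔ H.Adj (.inl i) (.inr (.inl j)))
    (hxq' : ∀ i j, G.Adj (x i) (q j) ↔ H.Adj (.inl i) (.inr (.inr j)))
    (hpp' : ∀ i j, G.Adj (p i) (p j) ↔ H.Adj (.inr (.inl i)) (.inr (.inl j)))
    (hpq' : ∀ i j, G.Adj (p i) (q j) ↔ H.Adj (.inr (.inl i)) (.inr (.inr j)))
    (hqq' : ∀ i j, G.Adj (q i) (q j) ↔ H.Adj (.inr (.inr i)) (.inr (.inr j))) :
    HasInducedCopyG H G := by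
  refine ⟨Sum.elim x (Sum.elim p q), ?_, ?_⟩
  · rintro (i | i | i) (j | j | j) h <;> simp only [Sum.elim_inl, Sum.elim_inr] at h
    all_goals first
      | rw [hx h] | rw [hp h] | rw [hq h]
      | exact absurd h (hxp _ _) | exact absurd h.symm (hxp _ _)
      | exact absurd h (hxq _ _) | exact absurd h.symm (hxq _ _)
      | exact absurd h (hpq _ _) | exact absurd h.symm (hpq _ _)
  · rintro (i | i | i) (j | j | j) <;> simp only [Sum.elim_inl, Sum.elim_inr]
    all_goals first
      | apply hxx' | apply hxp' | apply hxq' | apply hpp' | apply hpq' | apply hqq'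
      | rw [G.adj_comm, H.adj_comm]
        first | apply hxp' | apply hxq' | apply hpq'

end InducedCopy

section InducedPath

variable {V : Type} {G : SimpleGraph V} {l m : ℕ} {v : Fin l → V}

theorem IsInducedPathEmb.comp (hv : IsInducedPathEmb G v) {e : Fin m → Fin l}
    (he : Injective e)
    (hadj : ∀ i j,
      ((e i : ℕ) + 1 = e j ∨ (e j : ℕ) + 1 = e i) ↔ ((i : ℕ) + 1 = j ∨ (j : ℕ) + 1 = i)) :
    IsInducedPathEmb G (v ∘ e) :=
  ⟨hv.1.comp he, fun i j => (hv.2 _ _).trans (hadj i j)⟩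

theorem IsInducedPathEmb.comp_add (hv : IsInducedPathEmb G v) (s : ℕ) (h : s + m ≤ l) :
    IsInducedPathEmb G (fun k : Fin m => v ⟨s + k, by omega⟩) :=
  hv.comp (fun i j hij => by simpa [Fin.ext_iff] using hij) (fun i j => by simp; omega)

theorem IsInducedPathEmb.comp_sub (hv : IsInducedPathEmb G v) (s : ℕ) (hs : s < l)
    (h : m ≤ s + 1) : IsInducedPathEmb G (fun k : Fin m => v ⟨s - k, by omega⟩) :=
  hv.comp (fun i j hij => by simp [Fin.ext_iff] at hij; omega) (fun i j => by simp; omega)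

theorem IsInducedPathEmb.cons {p : Fin m → V} (hp : IsInducedPathEmb G p) {w : V}
    (hw : w ∉ Set.range p) (hwp : ∀ i, G.Adj w (p i) ↔ (i : ℕ) = 0) :
    IsInducedPathEmb G (Fin.cons w p : Fin (m + 1) → V) := by
  refine ⟨Fin.cons_injective_iff.2 ⟨hw, hp.1⟩, fun i j => ?_⟩
  induction i using Fin.cases <;> induction j using Fin.cases
  · simp
  · simp [hwp]
  · simp [G.adj_comm _ w, hwp]
  · simp [hp.2]

end InducedPath

section Spider

variable {V : Type} {G : SimpleGraph V} {n : ℕ} {x₁ x₂ : V} {p q : Fin n → V}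

theorem hasInducedCopyG_F1G (hp : IsInducedPathEmb G p) (hq : IsInducedPathEmb G q)
    (hpq : ∀ i j, p i ≠ q j ∧ ¬G.Adj (p i) (q j)) (h₁₂ : G.Adj x₁ x₂)
    (h₁p : ∀ i, x₁ ≠ p i ∧ (G.Adj x₁ (p i) ↔ (i : ℕ) = 0))
    (h₁q : ∀ j, x₁ ≠ q j ∧ (G.Adj x₁ (q j) ↔ (j : ℕ) = 0))
    (h₂p : ∀ i, x₂ ≠ p i ∧ ¬G.Adj x₂ (p i)) (h₂q : ∀ j, x₂ ≠ q j ∧ ¬G.Adj x₂ (q j)) :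
    HasInducedCopyG (F1G n) G := by
  refine hasInducedCopyG_sumElim (x := ![x₁, x₂]) ?_ hp.1 hq.1 ?_ ?_
    (fun i j => (hpq i j).1) ?_ ?_ ?_ ?_ ?_ ?_
  · intro i j
    fin_cases i <;> fin_cases j <;> simp [h₁₂.ne, h₁₂.ne']
  all_goals intro i j
  all_goals try fin_cases i
  all_goals try fin_cases j
  all_goals simp [F1G, h₁₂, h₁₂.symm, h₁p, h₁q, h₂p, h₂q, hpq, hp.2, hq.2]
  all_goals omega

theorem hasInducedCopyG_F3G_or_F4G (hp : IsInducedPathEmb G p) (hq : IsInducedPathEmb G q)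
    (hpq : ∀ i j, p i ≠ q j ∧ (G.Adj (p i) (q j) → (i : ℕ) = 0 ∧ (j : ℕ) = 0))
    (h₁₂ : x₁ ≠ x₂) (hx₁₂ : ¬G.Adj x₁ x₂)
    (h₁p : ∀ i, x₁ ≠ p i ∧ (G.Adj x₁ (p i) ↔ (i : ℕ) = 0))
    (h₁q : ∀ j, x₁ ≠ q j ∧ (G.Adj x₁ (q j) ↔ (j : ℕ) = 0))
    (h₂p : ∀ i, x₂ ≠ p i ∧ (G.Adj x₂ (p i) ↔ (i : ℕ) = 0))
    (h₂q : ∀ j, x₂ ≠ q j ∧ (G.Adj x₂ (q j) ↔ (j : ℕ) = 0)) :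
    HasInducedCopyG (F3G n) G ∨ HasInducedCopyG (F4G n) G := by
  have hx : Injective ![x₁, x₂] := by
    intro i j
    fin_cases i <;> fin_cases j <;> simp [h₁₂, h₁₂.symm]
  by_cases hroot : ∃ i j, G.Adj (p i) (q j)
  · right
    obtain ⟨i₀, j₀, hij₀⟩ := hroot
    have hpq' : ∀ i j, G.Adj (p i) (q j) ↔ (i : ℕ) = 0 ∧ (j : ℕ) = 0 := fun i j =>
      ⟨(hpq i j).2, fun ⟨hi, hj⟩ => by
        obtain ⟨hi₀, hj₀⟩ := (hpq i₀ j₀).2 hij₀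
        rwa [Fin.ext (hi.trans hi₀.symm), Fin.ext (hj.trans hj₀.symm)]⟩
    refine hasInducedCopyG_sumElim hx hp.1 hq.1 ?_ ?_ (fun i j => (hpq i j).1) ?_ ?_ ?_ ?_ ?_ ?_
    all_goals intro i j
    all_goals try fin_cases i
    all_goals try fin_cases j
    all_goals simp [F4G, F3G, YZEdgeG, hx₁₂, G.adj_comm x₂ x₁, h₁p, h₁q, h₂p, h₂q, hpq', hp.2,
      hq.2]
    all_goals omega
  · left
    push Not at hroot
    refine hasInducedCopyG_sumElim hx hp.1 hq.1 ?_ ?_ (fun i j => (hpq i j).1) ?_ ?_ ?_ ?_ ?_ ?_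
    all_goals intro i j
    all_goals try fin_cases i
    all_goals try fin_cases j
    all_goals simp [F3G, hx₁₂, G.adj_comm x₂ x₁, h₁p, h₁q, h₂p, h₂q, hroot, hp.2, hq.2]
    all_goals omega

end Spider

theorem IsLeast.mem_iff_eq_of_le {α : Type*} [PartialOrder α] {s : Set α} {a i : α}
    (h : IsLeast s a) (hi : i ≤ a) : i ∈ s ↔ i = a :=
  ⟨fun hs => le_antisymm hi (h.2 hs), fun e => e ▸ h.1⟩

theorem IsGreatest.mem_iff_eq_of_ge {α : Type*} [PartialOrder α] {s : Set α} {a i : α}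
    (h : IsGreatest s a) (hi : a ≤ i) : i ∈ s ↔ i = a :=
  ⟨fun hs => le_antisymm (h.2 hs) hi, fun e => e ▸ h.1⟩

section Attachment

variable {V : Type} {G : SimpleGraph V} {n l : ℕ} {v : Fin l → V}

theorem hasInducedCopyG_F1G_of_pendant (hv : IsInducedPathEmb G v) {w : V}
    (hw : ∀ i, v i ≠ w) {a : Fin l} (hwa : ∀ i, G.Adj w (v i) ↔ i = a)
    (ha : n ≤ a) (ha' : a + n < l) : HasInducedCopyG (F1G n) G := by
  refine hasInducedCopyG_F1G (x₁ := v a) (x₂ := w) (hv.comp_sub (a - 1) (by omega) (by omega))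
    (hv.comp_add (a + 1) (by omega)) ?_ ((hwa a).2 rfl).symm ?_ ?_ ?_ ?_
  all_goals intros
  all_goals simp [hv.1.eq_iff, hv.2, Fin.ext_iff, hwa, (hw _).symm]
  all_goals omega

theorem exists_adj_gt_of_not_hasInducedCopyG_F1G (hF1 : ¬HasInducedCopyG (F1G n) G)
    (hv : IsInducedPathEmb G v) {w : V} (hw : ∀ i, v i ≠ w) {a : Fin l}
    (hwa : IsLeast {i | G.Adj w (v i)} a) (ha : n ≤ a) (ha' : a + n < l) :
    ∃ j, a < j ∧ G.Adj w (v j) := by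
  by_contra! hgt
  exact hF1 (hasInducedCopyG_F1G_of_pendant hv hw
    (fun i => ⟨fun h => (hwa.2 h).antisymm' (not_lt.1 fun hi => hgt i hi h), (· ▸ hwa.1)⟩)
    ha ha')

theorem hasInducedCopyG_F3G_or_F4G_of_common_ends (hv : IsInducedPathEmb G v) {y y' : V}
    (hy : ∀ i, v i ≠ y) (hy' : ∀ i, v i ≠ y') (hne : y ≠ y') (hnadj : ¬G.Adj y y')
    {a b : Fin l} (hab : a < b)
    (hya : IsLeast {i | G.Adj y (v i)} a) (hyb : IsGreatest {i | G.Adj y (v i)} b)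
    (hy'a : IsLeast {i | G.Adj y' (v i)} a) (hy'b : IsGreatest {i | G.Adj y' (v i)} b)
    (ha : n ≤ a + 1) (hb : b + n ≤ l) :
    HasInducedCopyG (F3G n) G ∨ HasInducedCopyG (F4G n) G := by
  set p := fun k : Fin n => v ⟨a - k, by omega⟩
  set q := fun k : Fin n => v ⟨b + k, by omega⟩
  have hends : ∀ w, (∀ i, v i ≠ w) → IsLeast {i | G.Adj w (v i)} a →
      IsGreatest {i | G.Adj w (v i)} b →
      (∀ i, w ≠ p i ∧ (G.Adj w (p i) ↔ (i : ℕ) = 0)) ∧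
      (∀ j, w ≠ q j ∧ (G.Adj w (q j) ↔ (j : ℕ) = 0)) := by
    intro w hw hwa hwb
    refine ⟨fun i => ⟨(hw _).symm, (hwa.mem_iff_eq_of_le ?_).trans ?_⟩,
      fun j => ⟨(hw _).symm, (hwb.mem_iff_eq_of_ge ?_).trans ?_⟩⟩
    all_goals simp only [Fin.ext_iff, Fin.le_def]
    all_goals omega
  obtain ⟨h₁p, h₁q⟩ := hends y hy hya hyb
  obtain ⟨h₂p, h₂q⟩ := hends y' hy' hy'a hy'b
  refine hasInducedCopyG_F3G_or_F4G (hv.comp_sub a a.isLt (by omega)) (hv.comp_add b hb)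
    (fun i j => ?_) hne hnadj h₁p h₁q h₂p h₂q
  simp only [ne_eq, hv.1.eq_iff, hv.2, Fin.ext_iff]
  omega

theorem hasInducedCopyG_F1G_of_common_start (hv : IsInducedPathEmb G v) {w w' : V}
    (hw : ∀ i, v i ≠ w) (hw' : ∀ i, v i ≠ w') (hne : w ≠ w') (hnadj : ¬G.Adj w w')
    {a b : Fin l} (hab : (a : ℕ) + 1 < b)
    (hwa : IsLeast {i | G.Adj w (v i)} a) (hwb : IsGreatest {i | G.Adj w (v i)} b)
    (hw'a : IsLeast {i | G.Adj w' (v i)} a) (hw'b : ∀ i, G.Adj w' (v i) → i < b)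
    (hn : 0 < n) (ha : n ≤ a) (hb : b + n ≤ l + 1) : HasInducedCopyG (F1G n) G := by
  obtain ⟨m, rfl⟩ := Nat.exists_eq_add_one_of_ne_zero hn.ne'
  have hw_lo (i : Fin l) (hi : (i : ℕ) < a) : ¬G.Adj w (v i) := fun h => (hwa.2 h).not_gt hi
  have hw'_lo (i : Fin l) (hi : (i : ℕ) < a) : ¬G.Adj w' (v i) := fun h => (hw'a.2 h).not_gt hi
  have hw'_hi (i : Fin l) (hi : (b : ℕ) ≤ i) : ¬G.Adj w' (v i) := fun h => (hw'b i h).not_ge hi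
  have hq : IsInducedPathEmb G (Fin.cons w fun k : Fin m => v ⟨b + k, by omega⟩) := by
    refine (hv.comp_add b (by omega)).cons (by rintro ⟨k, hk⟩; exact hw _ hk) fun k =>
      (hwb.mem_iff_eq_of_ge ?_).trans ?_ <;> simp [Fin.le_def, Fin.ext_iff]
  refine hasInducedCopyG_F1G (x₁ := v a) (x₂ := w') (hv.comp_sub (a - 1) (by omega) (by omega))
    hq (fun i j => ?_) hw'a.1.symm (fun i => ?_) (fun j => ?_) (fun i => ?_) (fun j => ?_)
  · induction j using Fin.cases
    · exact ⟨hw _, fun h => hw_lo _ (by simp; omega) h.symm⟩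
    · simp only [Fin.cons_succ, ne_eq, hv.1.eq_iff, hv.2, Fin.ext_iff]; omega
  · simp only [ne_eq, hv.1.eq_iff, hv.2, Fin.ext_iff]; omega
  · induction j using Fin.cases
    · exact ⟨hw a, by simpa using hwa.1.symm⟩
    · simp only [Fin.cons_succ, ne_eq, hv.1.eq_iff, hv.2, Fin.ext_iff, Fin.val_succ]; omega
  · exact ⟨(hw' _).symm, hw'_lo _ (by simp; omega)⟩
  · induction j using Fin.cases
    · exact ⟨hne.symm, fun h => hnadj h.symm⟩
    · exact ⟨(hw' _).symm, hw'_hi _ (by simp)⟩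

end Attachment

theorem same_attachment_adjacent_general (n : ℕ) (hn : 3 ≤ n) (V : Type) (G : SimpleGraph V)
    (hF1 : ¬ HasInducedCopyG (F1G n) G)
    (hF3 : ¬ HasInducedCopyG (F3G n) G) (hF4 : ¬ HasInducedCopyG (F4G n) G)
    (l : ℕ) (v : Fin l → V) (hQ : IsInducedPathEmb G v)
    (y y' : V) (hne : y ≠ y') (hy : y ∉ Set.range v) (hy' : y' ∉ Set.range v)
    (hmid : ∀ i : Fin l, G.Adj y (v i) → n ≤ i.val ∧ i.val + n + 1 ≤ l)
    (hmid' : ∀ i : Fin l, G.Adj y' (v i) → n ≤ i.val ∧ i.val + n + 1 ≤ l)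
    (iy : Fin l) (hiy : G.Adj y (v iy)) (hmin : ∀ i : Fin l, G.Adj y (v i) → iy ≤ i)
    (iy' : Fin l) (hiy' : G.Adj y' (v iy'))
    (hmin' : ∀ i : Fin l, G.Adj y' (v i) → iy' ≤ i)
    (heq : iy = iy') :
    G.Adj y y' := by
  subst heq
  by_contra hyy'
  have hvy : ∀ i, v i ≠ y := fun i h => hy ⟨i, h⟩
  have hvy' : ∀ i, v i ≠ y' := fun i h => hy' ⟨i, h⟩
  have hya : IsLeast {i | G.Adj y (v i)} iy := ⟨hiy, hmin⟩
  have hy'a : IsLeast {i | G.Adj y' (v i)} iy := ⟨hiy', hmin'⟩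
  obtain ⟨hna, hal⟩ := hmid iy hiy
  obtain ⟨j, hj, hyj⟩ := exists_adj_gt_of_not_hasInducedCopyG_F1G hF1 hQ hvy hya hna (by omega)
  obtain ⟨j', hj', hy'j'⟩ :=
    exists_adj_gt_of_not_hasInducedCopyG_F1G hF1 hQ hvy' hy'a hna (by omega)
  obtain ⟨b, hb, hbmax⟩ : ∃ b ∈ {i | G.Adj y (v i)} ∪ {i | G.Adj y' (v i)}, ∀ i ∈ _, i ≤ b :=
    Set.exists_max_image _ id (Set.toFinite _) ⟨iy, Or.inl hiy⟩
  have hbl : (b : ℕ) + n + 1 ≤ l := (hb.elim (hmid b) (hmid' b)).2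
  by_cases hyb : G.Adj y (v b) <;> by_cases hy'b : G.Adj y' (v b)
  · exact (hasInducedCopyG_F3G_or_F4G_of_common_ends hQ hvy hvy' hne hyy'
      (hj.trans_le (hbmax j (Or.inl hyj))) hya ⟨hyb, fun i h => hbmax i (Or.inl h)⟩
      hy'a ⟨hy'b, fun i h => hbmax i (Or.inr h)⟩ (by omega) (by omega)).elim hF3 hF4
  · have hy'lt : ∀ i, G.Adj y' (v i) → i < b := fun i h =>
      (hbmax i (Or.inr h)).lt_of_ne (by rintro rfl; exact hy'b h)
    exact hF1 (hasInducedCopyG_F1G_of_common_start hQ hvy hvy' hne hyy'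
      (Nat.succ_le_of_lt hj' |>.trans_lt (hy'lt j' hy'j')) hya
      ⟨hyb, fun i h => hbmax i (Or.inl h)⟩ hy'a hy'lt (by omega) hna (by omega))
  · have hylt : ∀ i, G.Adj y (v i) → i < b := fun i h =>
      (hbmax i (Or.inl h)).lt_of_ne (by rintro rfl; exact hyb h)
    exact hF1 (hasInducedCopyG_F1G_of_common_start hQ hvy' hvy hne.symm (hyy' ·.symm)
      (Nat.succ_le_of_lt hj |>.trans_lt (hylt j hyj)) hy'a
      ⟨hy'b, fun i h => hbmax i (Or.inr h)⟩ hya hylt (by omega) hna (by omega))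
  · exact hb.elim hyb hy'b

/-- Let `n ≥ 3`, `G` be `{F^(1)_n, F^(2)_n, F^(3)_n, F^(4)_n}`-free,
`Q = v₁⋯v_l` an induced path, and `y ≠ y'` vertices off `Q`, each with a neighbor on
`Q`, all of whose neighbors on `Q` lie among `v_{n+1}, …, v_{l−n}`.  If `i_y = i_{y'}`
then `yy' ∈ E(G)`.  (Indices are shifted to be 0-based.) -/
theorem same_attachment_adjacent (n : ℕ) (hn : 3 ≤ n) (V : Type) (G : SimpleGraph V)
    (hF1 : ¬ HasInducedCopyG (F1G n) G) (hF2 : ¬ HasInducedCopyG (F2G n) G)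
    (hF3 : ¬ HasInducedCopyG (F3G n) G) (hF4 : ¬ HasInducedCopyG (F4G n) G)
    (l : ℕ) (v : Fin l → V) (hQ : IsInducedPathEmb G v)
    (y y' : V) (hne : y ≠ y') (hy : y ∉ Set.range v) (hy' : y' ∉ Set.range v)
    (hmid : ∀ i : Fin l, G.Adj y (v i) → n ≤ i.val ∧ i.val + n + 1 ≤ l)
    (hmid' : ∀ i : Fin l, G.Adj y' (v i) → n ≤ i.val ∧ i.val + n + 1 ≤ l)
    (iy : Fin l) (hiy : G.Adj y (v iy)) (hmin : ∀ i : Fin l, G.Adj y (v i) → iy ≤ i)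
    (iy' : Fin l) (hiy' : G.Adj y' (v iy'))
    (hmin' : ∀ i : Fin l, G.Adj y' (v i) → iy' ≤ i)
    (heq : iy = iy') :
    G.Adj y y' :=
  same_attachment_adjacent_general n hn V G hF1 hF3 hF4 l v hQ y y' hne hy hy' hmid hmid' iy hiy
    hmin iy' hiy' hmin' heq
end
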